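/- arXiv:1302.2426 — 8 statements merged into one kernel-verified Lean document; each statement's English description precedes it below -/
import Mathlib

section
/- For every positive integer p, there exists a finite collection of triples (v_i, a_i, d_i) ∈ ℝ³ with a_i ≤ d_i (a dynamic point set, where point v_i is present on the real line during the time interval [a_i, d_i)) such that for every 2-coloring of the collection, there exists a time t and p points present at time t that are consecutive (in the order of their values v_i among all points present at time t) and all of the same color. -/
/-- The set of triples of a dynamic point set present at time `t`:
the point `v = s.1` appears at `a = s.2.1` and disappears at `d = s.2.2`,
and is present for `t ∈ [a, d)`. -/
noncomputable def Present (S : Finset (ℝ × ℝ × ℝ)) (t : ℝ) : Finset (ℝ × ℝ × ℝ) :=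
  S.filter (fun s => s.2.1 ≤ t ∧ t < s.2.2)

/-- `C` is a set of consecutive points among `T`, in the order of their values
(first coordinates). -/
def ConsecIn (T C : Finset (ℝ × ℝ × ℝ)) : Prop :=
  C ⊆ T ∧ ∀ p ∈ C, ∀ q ∈ C, ∀ r ∈ T, p.1 ≤ r.1 → r.1 ≤ q.1 → r ∈ C

/-!
Read the color `true` as black and `false` as white. By induction on `i + j`, every box
(value window × time window) contains a dynamic point set for which every coloring shows, at some
time, its `i` lowest present points black or its `j` highest present points white; for `i = 0` or
`j = 0` the empty set will do. For `(i + 1, j + 1)`, place sets for `(i + 1, j)`, `(i, j)` and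
`(i, j + 1)` in three consecutive time windows and increasing value windows, and add a point `x`
between the first two value windows, alive during the first two time windows, and a point `z`
between the last two value windows, alive during the last two time windows. If `x` is white, it
tops a white run of the first set; if `x` and `z` are black, `z` extends a black bottom run of the
last set; otherwise the black `x` and the white `z` frame the middle set and extend whichever run
it shows. Take `i = j = p`.
-/

namespace DynamicColoring

abbrev Pt := ℝ × ℝ × ℝ

theorem present_insert (x : Pt) (S : Finset Pt) (t : ℝ) :
    Present (insert x S) t =
      if x.2.1 ≤ t ∧ t < x.2.2 then insert x (Present S t) else Present S t :=
  Finset.filter_insert _ _ _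

theorem present_union (S S' : Finset Pt) (t : ℝ) :
    Present (S ∪ S') t = Present S t ∪ Present S' t :=
  Finset.filter_union _ _ _

section InitialSeg

variable {f : ℝ → ℝ} {T R : Finset Pt} {x : Pt}

def IsInitialSeg (f : ℝ → ℝ) (T R : Finset Pt) : Prop :=
  R ⊆ T ∧ ∀ r ∈ T, ∀ q ∈ R, f r.1 ≤ f q.1 → r ∈ R

theorem isInitialSeg_empty (f : ℝ → ℝ) (T : Finset Pt) : IsInitialSeg f T ∅ := by
  simp [IsInitialSeg]

theorem IsInitialSeg.insert_of_lt (h : IsInitialSeg f T R) (hx : ∀ r ∈ T, f x.1 < f r.1) :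
    IsInitialSeg f (insert x T) (insert x R) := by
  refine ⟨Finset.insert_subset_insert x h.1, fun r hr q hq hrq => ?_⟩
  rcases Finset.mem_insert.mp hr with rfl | hrT
  · exact Finset.mem_insert_self _ _
  rcases Finset.mem_insert.mp hq with rfl | hqR
  · exact absurd hrq (hx r hrT).not_ge
  · exact Finset.mem_insert_of_mem (h.2 r hrT q hqR hrq)

theorem IsInitialSeg.insert_of_gt (h : IsInitialSeg f T R) (hx : ∀ r ∈ T, f r.1 < f x.1) :
    IsInitialSeg f (insert x T) R := by
  refine ⟨h.1.trans (Finset.subset_insert x T), fun r hr q hq hrq => ?_⟩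
  rcases Finset.mem_insert.mp hr with rfl | hrT
  · exact absurd hrq (hx q (h.1 hq)).not_ge
  · exact h.2 r hrT q hq hrq

theorem IsInitialSeg.consecIn (hf : Monotone f ∨ Antitone f) (h : IsInitialSeg f T R) :
    ConsecIn T R := by
  refine ⟨h.1, fun p hp q hq r hr hpr hrq => ?_⟩
  rcases hf with hf | hf
  · exact h.2 r hr q hq (hf hrq)
  · exact h.2 r hr p hp (hf hpr)

end InitialSeg

section MonoInitialSeg

variable {f : ℝ → ℝ} {χ : Pt → Bool} {c : Bool} {n : ℕ} {T : Finset Pt} {x : Pt}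

def HasMonoInitialSeg (f : ℝ → ℝ) (χ : Pt → Bool) (c : Bool) (n : ℕ) (T : Finset Pt) : Prop :=
  ∃ R : Finset Pt, R.card = n ∧ (∀ s ∈ R, χ s = c) ∧ IsInitialSeg f T R

theorem hasMonoInitialSeg_zero (f : ℝ → ℝ) (χ : Pt → Bool) (c : Bool) (T : Finset Pt) :
    HasMonoInitialSeg f χ c 0 T :=
  ⟨∅, Finset.card_empty, by simp, isInitialSeg_empty f T⟩

theorem HasMonoInitialSeg.insert_of_lt (h : HasMonoInitialSeg f χ c n T)
    (hx : ∀ r ∈ T, f x.1 < f r.1) (hc : χ x = c) :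
    HasMonoInitialSeg f χ c (n + 1) (insert x T) := by
  obtain ⟨R, hcard, hmono, hseg⟩ := h
  have hxR : x ∉ R := fun hxR => (hx x (hseg.1 hxR)).false
  refine ⟨insert x R, by rw [Finset.card_insert_of_notMem hxR, hcard], ?_, hseg.insert_of_lt hx⟩
  simpa [hc] using hmono

theorem HasMonoInitialSeg.insert_of_gt (h : HasMonoInitialSeg f χ c n T)
    (hx : ∀ r ∈ T, f r.1 < f x.1) : HasMonoInitialSeg f χ c n (insert x T) :=
  let ⟨R, hcard, hmono, hseg⟩ := h
  ⟨R, hcard, hmono, hseg.insert_of_gt hx⟩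

end MonoInitialSeg

section ExtremeRun

variable {χ : Pt → Bool} {i j : ℕ} {T : Finset Pt} {x : Pt}

/-- `Neg.neg` reverses the order of values, so the second disjunct says that the `j` highest
points of `T` are all `false`. -/
def HasExtremeRun (χ : Pt → Bool) (i j : ℕ) (T : Finset Pt) : Prop :=
  HasMonoInitialSeg id χ true i T ∨ HasMonoInitialSeg Neg.neg χ false j T

theorem hasExtremeRun_zero_left (χ : Pt → Bool) (j : ℕ) (T : Finset Pt) :
    HasExtremeRun χ 0 j T :=
  Or.inl (hasMonoInitialSeg_zero _ _ _ _)

theorem hasExtremeRun_zero_right (χ : Pt → Bool) (i : ℕ) (T : Finset Pt) :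
    HasExtremeRun χ i 0 T :=
  Or.inr (hasMonoInitialSeg_zero _ _ _ _)

theorem HasExtremeRun.insert_below (h : HasExtremeRun χ i j T) (hx : ∀ r ∈ T, x.1 < r.1)
    (hc : χ x = true) : HasExtremeRun χ (i + 1) j (insert x T) :=
  h.imp (·.insert_of_lt hx hc) (·.insert_of_gt fun r hr => neg_lt_neg (hx r hr))

theorem HasExtremeRun.insert_above (h : HasExtremeRun χ i j T) (hx : ∀ r ∈ T, r.1 < x.1)
    (hc : χ x = false) : HasExtremeRun χ i (j + 1) (insert x T) :=
  h.imp (·.insert_of_gt hx) (·.insert_of_lt (fun r hr => neg_lt_neg (hx r hr)) hc)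

theorem HasExtremeRun.exists_consecIn {p : ℕ} (h : HasExtremeRun χ p p T) :
    ∃ C, ConsecIn T C ∧ C.card = p ∧ ∃ c : Bool, ∀ s ∈ C, χ s = c := by
  rcases h with ⟨C, hcard, hmono, hseg⟩ | ⟨C, hcard, hmono, hseg⟩
  · exact ⟨C, hseg.consecIn (Or.inl monotone_id), hcard, true, hmono⟩
  · exact ⟨C, hseg.consecIn (Or.inr fun _ _ => neg_le_neg), hcard, false, hmono⟩

end ExtremeRun

section Box

variable {α β σ τ t : ℝ} {S S' : Finset Pt} {s x : Pt}

def InBox (α β σ τ : ℝ) (S : Finset Pt) : Prop :=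
  ∀ s ∈ S, α < s.1 ∧ s.1 < β ∧ σ ≤ s.2.1 ∧ s.2.1 ≤ s.2.2 ∧ s.2.2 ≤ τ

theorem InBox.mono {α' β' σ' τ' : ℝ} (h : InBox α β σ τ S) (hα : α' ≤ α) (hβ : β ≤ β')
    (hσ : σ' ≤ σ) (hτ : τ ≤ τ') : InBox α' β' σ' τ' S := fun s hs =>
  let ⟨h₁, h₂, h₃, h₄, h₅⟩ := h s hs
  ⟨hα.trans_lt h₁, h₂.trans_le hβ, hσ.trans h₃, h₄, h₅.trans hτ⟩

theorem InBox.union (h : InBox α β σ τ S) (h' : InBox α β σ τ S') : InBox α β σ τ (S ∪ S') :=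
  fun s hs => (Finset.mem_union.mp hs).elim (h s) (h' s)

theorem InBox.insert (h : InBox α β σ τ S)
    (hx : α < x.1 ∧ x.1 < β ∧ σ ≤ x.2.1 ∧ x.2.1 ≤ x.2.2 ∧ x.2.2 ≤ τ) :
    InBox α β σ τ (insert x S) :=
  Finset.forall_mem_insert _ _ _ |>.mpr ⟨hx, h⟩

theorem InBox.present_eq_empty (h : InBox α β σ τ S) (ht : t < σ ∨ τ ≤ t) :
    Present S t = ∅ := by
  refine Finset.filter_eq_empty_iff.mpr fun s hs hst => ?_
  obtain ⟨-, -, hσ, -, hτ⟩ := h s hs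
  rcases ht with ht | ht <;> linarith [hst.1, hst.2]

theorem InBox.mem_present (h : InBox α β σ τ S) (hs : s ∈ Present S t) : α < s.1 ∧ s.1 < β :=
  (h s (Finset.mem_filter.mp hs).1).imp_right And.left

end Box

def ForcesExtremeRun (i j : ℕ) (S : Finset Pt) (σ τ : ℝ) : Prop :=
  ∀ χ : Pt → Bool, ∃ t, σ ≤ t ∧ t < τ ∧ HasExtremeRun χ i j (Present S t)

def HasForcingSets (i j : ℕ) : Prop :=
  ∀ α β σ τ : ℝ, α < β → σ < τ → ∃ S, InBox α β σ τ S ∧ ForcesExtremeRun i j S σ τ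

theorem hasForcingSets_of_eq_zero {i j : ℕ} (h : i = 0 ∨ j = 0) : HasForcingSets i j := by
  refine fun α β σ τ _ hστ => ⟨∅, by simp [InBox], fun χ => ⟨σ, le_rfl, hστ, ?_⟩⟩
  rcases h with rfl | rfl
  exacts [hasExtremeRun_zero_left χ j _, hasExtremeRun_zero_right χ i _]

theorem HasForcingSets.succ_succ {i j : ℕ} (hE : HasForcingSets (i + 1) j)
    (hA : HasForcingSets i j) (hD : HasForcingSets i (j + 1)) :
    HasForcingSets (i + 1) (j + 1) := by
  intro α β σ τ hαβ hστ
  obtain ⟨a₁, a₂, hα, ha, hβ⟩ : ∃ a₁ a₂, α < a₁ ∧ a₁ < a₂ ∧ a₂ < β :=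
    ⟨α + (β - α) / 3, α + 2 * (β - α) / 3, by linarith, by linarith, by linarith⟩
  obtain ⟨t₁, t₂, hσ, ht, hτ⟩ : ∃ t₁ t₂, σ < t₁ ∧ t₁ < t₂ ∧ t₂ < τ :=
    ⟨σ + (τ - σ) / 3, σ + 2 * (τ - σ) / 3, by linarith, by linarith, by linarith⟩
  obtain ⟨E, hEbox, hE⟩ := hE α a₁ σ t₁ hα hσ
  obtain ⟨A, hAbox, hA⟩ := hA a₁ a₂ t₁ t₂ ha ht
  obtain ⟨D, hDbox, hD⟩ := hD a₂ β t₂ τ hβ hτ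
  let x : Pt := (a₁, σ, t₂)
  let z : Pt := (a₂, t₁, τ)
  refine ⟨insert x (insert z (E ∪ A ∪ D)), ?_, fun χ => ?_⟩
  · refine ((((hEbox.mono le_rfl (ha.trans hβ).le le_rfl (ht.trans hτ).le).union
      (hAbox.mono hα.le hβ.le hσ.le hτ.le)).union
      (hDbox.mono (hα.trans ha).le le_rfl (hσ.trans ht).le le_rfl)).insert ?_).insert ?_
    · exact ⟨hα.trans ha, hβ, hσ.le, (ht.trans hτ).le, le_rfl⟩
    · exact ⟨hα, ha.trans hβ, le_rfl, (hσ.trans ht).le, hτ.le⟩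
  cases hx : χ x
  · obtain ⟨t, ht₁, ht₂, hrun⟩ := hE χ
    have hpres : Present (insert x (insert z (E ∪ A ∪ D))) t = insert x (Present E t) := by
      simp [present_insert, present_union, hAbox.present_eq_empty (.inl ht₂),
        hDbox.present_eq_empty (.inl (ht₂.trans ht)), x, z, ht₁, ht₂.not_ge, ht₂.trans ht]
    refine ⟨t, ht₁, ht₂.trans (ht.trans hτ), ?_⟩
    rw [hpres]
    exact hrun.insert_above (fun r hr => (hEbox.mem_present hr).2) hx
  cases hz : χ z
  · obtain ⟨t, ht₁, ht₂, hrun⟩ := hA χ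
    have hpres : Present (insert x (insert z (E ∪ A ∪ D))) t =
        insert x (insert z (Present A t)) := by
      simp [present_insert, present_union, hEbox.present_eq_empty (.inr ht₁),
        hDbox.present_eq_empty (.inl ht₂), x, z, ht₁, ht₂, hσ.le.trans ht₁, ht₂.trans hτ]
    refine ⟨t, hσ.le.trans ht₁, ht₂.trans hτ, ?_⟩
    rw [hpres]
    exact (hrun.insert_above (fun r hr => (hAbox.mem_present hr).2) hz).insert_below
      (Finset.forall_mem_insert _ _ _ |>.mpr ⟨ha, fun r hr => (hAbox.mem_present hr).1⟩) hx
  · obtain ⟨t, ht₁, ht₂, hrun⟩ := hD χ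
    have hpres : Present (insert x (insert z (E ∪ A ∪ D))) t = insert z (Present D t) := by
      simp [present_insert, present_union, hEbox.present_eq_empty (.inr (ht.le.trans ht₁)),
        hAbox.present_eq_empty (.inr ht₁), x, z, ht₁.not_gt, ht₂, ht.le.trans ht₁]
    refine ⟨t, (hσ.trans ht).le.trans ht₁, ht₂, ?_⟩
    rw [hpres]
    exact hrun.insert_below (fun r hr => (hDbox.mem_present hr).1) hz

theorem hasForcingSets (i j : ℕ) : HasForcingSets i j := by
  induction i generalizing j with
  | zero => exact hasForcingSets_of_eq_zero (.inl rfl)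
  | succ i ihi =>
    induction j with
    | zero => exact hasForcingSets_of_eq_zero (.inr rfl)
    | succ j ihj => exact ihj.succ_succ (ihi j) (ihi (j + 1))

end DynamicColoring

theorem dynamic_two_coloring_impossible_general (p : ℕ) :
    ∃ S : Finset (ℝ × ℝ × ℝ),
      (∀ s ∈ S, s.2.1 ≤ s.2.2) ∧
      ∀ χ : (ℝ × ℝ × ℝ) → Bool, ∃ t : ℝ, ∃ C : Finset (ℝ × ℝ × ℝ),
        ConsecIn (Present S t) C ∧ C.card = p ∧ ∃ c : Bool, ∀ s ∈ C, χ s = c := by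
  obtain ⟨S, hbox, hforce⟩ := DynamicColoring.hasForcingSets p p 0 1 0 1 one_pos one_pos
  refine ⟨S, fun s hs => (hbox s hs).2.2.2.1, fun χ => ?_⟩
  obtain ⟨t, -, -, hrun⟩ := hforce χ
  exact ⟨t, hrun.exists_consecIn⟩

/-- For every `p ≥ 1` there is a dynamic point set such that every 2-coloring
leaves, at some time `t`, `p` consecutive present points monochromatic. -/
theorem dynamic_two_coloring_impossible (p : ℕ) (hp : 0 < p) :
    ∃ S : Finset (ℝ × ℝ × ℝ),
      (∀ s ∈ S, s.2.1 ≤ s.2.2) ∧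
      ∀ χ : (ℝ × ℝ × ℝ) → Bool, ∃ t : ℝ, ∃ C : Finset (ℝ × ℝ × ℝ),
        ConsecIn (Present S t) C ∧ C.card = p ∧ ∃ c : Bool, ∀ s ∈ C, χ s = c :=
  dynamic_two_coloring_impossible_general p
end

section
/- Let T be the complete p-ary rooted tree of depth p, so that every root-to-leaf path contains exactly p vertices. Let the hypergraph H on the vertices of T have as hyperedges: (1) every set of p siblings (children of a common vertex), and (2) every set of p vertices forming a path from the root to a leaf. Then H is not 2-colorable: for every 2-coloring of the vertices of T, some hyperedge of H is monochromatic. -/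
lemma tree_aux (p : ℕ) (χ : List (Fin p) → Bool)
    (h : ∀ w : List (Fin p), w.length + 2 ≤ p → ∃ i : Fin p, χ (w ++ [i]) = χ []) :
    ∀ k, k + 1 ≤ p → ∃ w : List (Fin p), w.length = k ∧
      ∀ pre : List (Fin p), pre <+: w → χ pre = χ [] := by
  intro k
  induction k with
  | zero =>
    intro _
    exact ⟨[], rfl, fun pre hpre => by simp [List.prefix_nil.mp hpre]⟩
  | succ k ih =>
    intro hk
    obtain ⟨w, hw, hmono⟩ := ih (by omega)
    obtain ⟨i, hi⟩ := h w (by omega)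
    refine ⟨w ++ [i], by simp [hw], fun pre hpre => ?_⟩
    rcases List.prefix_concat_iff.mp hpre with h1 | h1
    · rw [h1, hi]
    · exact hmono pre h1

/-- Vertices of the complete `p`-ary tree in which every root-to-leaf path has
exactly `p` vertices are represented as lists over `Fin p` of length at most
`p - 1` (the root is the empty list, leaves have length `p - 1`).
The hypergraph whose hyperedges are (1) all sets of `p` siblings and
(2) all root-to-leaf paths (each consisting of the `p` prefixes of a leaf)
is not 2-colorable. -/
theorem tree_hypergraph_not_two_colorable (p : ℕ) (hp : 0 < p)
    (χ : List (Fin p) → Bool) :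
    (∃ w : List (Fin p), w.length + 2 ≤ p ∧
        ∃ c : Bool, ∀ i : Fin p, χ (w ++ [i]) = c) ∨
    (∃ l : List (Fin p), l.length = p - 1 ∧
        ∃ c : Bool, ∀ pre : List (Fin p), pre <+: l → χ pre = c) := by
  by_cases H : ∃ w : List (Fin p), w.length + 2 ≤ p ∧
      ∃ c : Bool, ∀ i : Fin p, χ (w ++ [i]) = c
  · exact Or.inl H
  · right
    push_neg at H
    have h : ∀ w : List (Fin p), w.length + 2 ≤ p → ∃ i : Fin p, χ (w ++ [i]) = χ [] := by
      intro w hw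
      obtain ⟨i, hi⟩ := H w hw (!χ [])
      exact ⟨i, by cases hχ : χ (w ++ [i]) <;> cases hr : χ [] <;> simp_all⟩
    obtain ⟨w, hw, hmono⟩ := tree_aux p χ h (p - 1) (by omega)
    exact ⟨w, hw, χ [], hmono⟩
end

section
/- For every positive integer p, there exists a finite collection S of corners in ℝ³ such that for every 2-coloring of S, there is a point x ∈ ℝ³ contained in exactly p corners of S, all of the same color. In particular, corners are not cover-decomposable. -/
/-- The corner with coordinates `(a, b, c)` (where `a ≤ b`) is
`{(x,y,z) : a ≤ x ≤ b, y ≤ c, z ≥ c}`. -/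
def InCorner (q s : ℝ × ℝ × ℝ) : Prop :=
  s.1 ≤ q.1 ∧ q.1 ≤ s.2.1 ∧ q.2.1 ≤ s.2.2 ∧ s.2.2 ≤ q.2.2

noncomputable instance : DecidablePred (fun s : ℝ × ℝ × ℝ => InCorner q s) := by
  unfold InCorner; infer_instance

/-!
Take the complete binary tree of depth `2p - 2`. A node at depth `n` gets the corner whose
`x`-range is its dyadic interval `[k / 2ⁿ, (k + 1) / 2ⁿ]` and whose apex height is reached
from its parent's by a step of `± 3^-(n+1)`. A point whose `x` is the midpoint of a leaf's
interval lies in the `x`-ranges of exactly the `2p - 1` nodes on the path from the root to that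
leaf, and its `(y, z)` window then selects those of them whose height lies in `[y, z]`.

Given a colouring, walk down from the root, stepping up in height from nodes of the root's colour
and down from the others. Each step is larger than all later steps together, so along this path
every node of the root's colour lies below every node of the other colour. One of the two classes
has at least `p` nodes on the path; a window around its `p` lowest (first class) or `p` highest
(second class) members catches exactly those `p` nodes.
-/

open Finset

namespace List

variable {α : Type*}

theorem exists_cons_suffix_of_suffix_of_ne {u v : List α} (h : u <:+ v) (hne : u ≠ v) :
    ∃ b, b :: u <:+ v := by
  induction v with
  | nil => exact absurd (suffix_nil.1 h) hne
  | cons a v ih =>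
    rcases suffix_cons_iff.1 h with rfl | h
    · exact absurd rfl hne
    by_cases huv : u = v
    · exact ⟨a, huv ▸ suffix_refl _⟩
    · obtain ⟨b, hb⟩ := ih h huv
      exact ⟨b, hb.trans (suffix_cons a v)⟩

theorem nodup_tails (l : List α) : l.tails.Nodup := by
  induction l with
  | nil => simp
  | cons a l ih =>
    refine nodup_cons.2 ⟨fun h => ?_, ih⟩
    simpa using ((mem_tails _ _).1 h).length_le

theorem card_toFinset_tails [DecidableEq α] (l : List α) :
    l.tails.toFinset.card = l.length + 1 := by
  rw [toFinset_card_of_nodup (nodup_tails l), length_tails]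

end List

section WindowSelection

variable {ι α : Type*} [LinearOrder α] {s : Finset ι} {g : ι → α} {p : ℕ}

theorem Finset.exists_card_filter_le_eq (hg : Set.InjOn g s) (hp : 0 < p) (hps : p ≤ #s) :
    ∃ i ∈ s, #{j ∈ s | g j ≤ g i} = p := by
  classical
  induction s using Finset.induction_on_max_value g with
  | empty => simp at hps; omega
  | insert a s has hmax ih =>
    have hlt : ∀ x ∈ s, g x < g a := fun x hx =>
      (hmax x hx).lt_of_ne fun h => has (hg (mem_insert_of_mem hx) (mem_insert_self a s) h ▸ hx)
    by_cases hs : p ≤ #s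
    · obtain ⟨i, hi, hcount⟩ := ih (hg.mono (by simp)) hs
      refine ⟨i, mem_insert_of_mem hi, ?_⟩
      rw [filter_insert, if_neg (not_le.2 (hlt i hi)), hcount]
    · refine ⟨a, mem_insert_self a s, ?_⟩
      rw [filter_true_of_mem fun j hj => ?_]
      · rw [card_insert_of_notMem has] at hps ⊢; omega
      · rcases mem_insert.1 hj with rfl | hj
        · exact le_rfl
        · exact (hlt j hj).le

theorem exists_window_of_le_card_filter_eq {f : ι → Bool} {c : Bool} (hg : Set.InjOn g s)
    (hsep : ∀ i ∈ s, ∀ j ∈ s, f i = c → f j ≠ c → g i < g j)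
    (hp : 0 < p) (hc : p ≤ #{i ∈ s | f i = c}) :
    ∃ lo hi, #{j ∈ s | lo ≤ g j ∧ g j ≤ hi} = p ∧
      ∀ j ∈ s, lo ≤ g j → g j ≤ hi → f j = c := by
  obtain ⟨i, hi, hcount⟩ := exists_card_filter_le_eq (hg.mono (filter_subset _ s)) hp hc
  obtain ⟨his, hic⟩ := mem_filter.1 hi
  have hwindow : {j ∈ s | s.inf' ⟨i, his⟩ g ≤ g j ∧ g j ≤ g i} =
      {j ∈ s | f j = c ∧ g j ≤ g i} := by
    refine filter_congr fun j hj =>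
      ⟨fun ⟨_, hji⟩ => ⟨?_, hji⟩, fun ⟨_, hji⟩ => ⟨inf'_le g hj, hji⟩⟩
    by_contra hjc
    exact (hsep i his j hj hic hjc).not_ge hji
  refine ⟨s.inf' ⟨i, his⟩ g, g i, ?_, fun j hj hlo hhi => ?_⟩
  · rw [hwindow, ← hcount, filter_filter]
  · have : j ∈ {j ∈ s | f j = c ∧ g j ≤ g i} := hwindow ▸ mem_filter.2 ⟨hj, hlo, hhi⟩
    exact (mem_filter.1 this).2.1

theorem exists_monochromatic_window {f : ι → Bool} (c : Bool) (hg : Set.InjOn g s)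
    (hsep : ∀ i ∈ s, ∀ j ∈ s, f i = c → f j ≠ c → g i < g j)
    (hp : 0 < p) (hs : 2 * p - 1 ≤ #s) :
    ∃ lo hi c', #{j ∈ s | lo ≤ g j ∧ g j ≤ hi} = p ∧
      ∀ j ∈ {j ∈ s | lo ≤ g j ∧ g j ≤ hi}, f j = c' := by
  have hsplit : #{i ∈ s | f i = c} + #{i ∈ s | f i = !c} = #s := by
    rw [← card_filter_add_card_filter_not (s := s) (fun i => f i = c)]
    simp only [Bool.eq_not_iff]
  by_cases hc : p ≤ #{i ∈ s | f i = c}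
  · obtain ⟨lo, hi, hcard, hcol⟩ := exists_window_of_le_card_filter_eq hg hsep hp hc
    refine ⟨lo, hi, c, hcard, fun j hj => ?_⟩
    obtain ⟨hj, hlo, hhi⟩ := mem_filter.1 hj
    exact hcol j hj hlo hhi
  · have hsep' : ∀ i ∈ s, ∀ j ∈ s, f i = !c → f j ≠ !c →
        OrderDual.toDual (g i) < OrderDual.toDual (g j) := fun i hi j hj hfi hfj =>
      hsep j hj i hi (by simpa using hfj) (by simp [hfi])
    obtain ⟨lo, hi, hcard, hcol⟩ :=
      exists_window_of_le_card_filter_eq (g := OrderDual.toDual ∘ g) hg hsep' hp (by omega)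
    refine ⟨OrderDual.ofDual hi, OrderDual.ofDual lo, !c, ?_, fun j hj => ?_⟩
    · rw [← hcard]
      exact congrArg card (filter_congr fun j _ => and_comm)
    obtain ⟨hj, hhi, hlo⟩ := mem_filter.1 hj
    exact hcol j hj hlo hhi

end WindowSelection

namespace CornerTree

/- A node of the complete binary tree is the list of turns from the node up to the root, so
`b :: u` is a child of `u` and the ancestors of `w` are its suffixes. The head is the least
significant digit of `binIndex`, which makes `binIndex u` the position of `u` among the nodes of
its depth. -/

def binIndex (u : List Bool) : ℕ := Nat.ofDigits 2 (u.map Bool.toNat)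

theorem forall_mem_map_toNat_lt_two {u : List Bool} : ∀ x ∈ u.map Bool.toNat, x < 2 :=
  List.forall_mem_map.2 fun b _ => Bool.toNat_lt b

theorem binIndex_append (t u : List Bool) :
    binIndex (t ++ u) = binIndex t + 2 ^ t.length * binIndex u := by
  simp [binIndex, Nat.ofDigits_append]

theorem binIndex_lt (u : List Bool) : binIndex u < 2 ^ u.length := by
  simpa [binIndex] using
    Nat.ofDigits_lt_base_pow_length (l := u.map Bool.toNat) one_lt_two forall_mem_map_toNat_lt_two

theorem eq_of_binIndex_eq {u v : List Bool} (hlen : u.length = v.length)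
    (h : binIndex u = binIndex v) : u = v :=
  List.map_injective_iff.2 (fun a b h => by cases a <;> cases b <;> simp_all) <|
    Nat.ofDigits_inj_of_len_eq one_lt_two (by simpa) forall_mem_map_toNat_lt_two
      forall_mem_map_toNat_lt_two h

noncomputable def leafPoint (w : List Bool) : ℝ := (binIndex w + 1 / 2) / 2 ^ w.length

theorem leafPoint_append_mem_Ioo (t u : List Bool) :
    leafPoint (t ++ u) ∈
      Set.Ioo ((binIndex u : ℝ) / 2 ^ u.length) ((binIndex u + 1) / 2 ^ u.length) := by
  have ht : (binIndex t : ℝ) + 1 ≤ 2 ^ t.length := by exact_mod_cast binIndex_lt t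
  have hu : (0 : ℝ) ≤ binIndex u := by positivity
  have hN : (0 : ℝ) < 2 ^ u.length := by positivity
  have hM : (0 : ℝ) < 2 ^ t.length := by positivity
  rw [leafPoint, binIndex_append, List.length_append, pow_add]
  push_cast
  constructor <;> rw [div_lt_div_iff₀ (by positivity) (by positivity)] <;> nlinarith

theorem leafPoint_mem_Icc_iff {u w : List Bool} (hlen : u.length ≤ w.length) :
    leafPoint w ∈
        Set.Icc ((binIndex u : ℝ) / 2 ^ u.length) ((binIndex u + 1) / 2 ^ u.length) ↔ u <:+ w := by
  constructor
  · rintro ⟨hlo, hhi⟩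
    set u' := w.drop (w.length - u.length)
    have hu' : u'.length = u.length := by simp [u']; omega
    have hw := leafPoint_append_mem_Ioo (w.take (w.length - u.length)) u'
    rw [List.take_append_drop, hu'] at hw
    have hN : (0 : ℝ) < 2 ^ u.length := by positivity
    have h1 : binIndex u < binIndex u' + 1 := by
      exact_mod_cast (div_lt_div_iff_of_pos_right hN).1 (hlo.trans_lt hw.2)
    have h2 : binIndex u' < binIndex u + 1 := by
      exact_mod_cast (div_lt_div_iff_of_pos_right hN).1 (hw.1.trans_le hhi)
    rw [eq_of_binIndex_eq hu'.symm (by omega)]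
    exact List.drop_suffix _ w
  · rintro ⟨t, rfl⟩
    exact Set.Ioo_subset_Icc_self (leafPoint_append_mem_Ioo t u)

noncomputable def nodeHeight : List Bool → ℝ
  | [] => 0
  | true :: v => nodeHeight v + (1 / 3) ^ (v.length + 1)
  | false :: v => nodeHeight v - (1 / 3) ^ (v.length + 1)

theorem abs_nodeHeight_cons_sub (b : Bool) (v : List Bool) :
    |nodeHeight (b :: v) - nodeHeight v| = (1 / 3) ^ (v.length + 1) := by
  cases b <;> simp [nodeHeight, abs_of_pos]

theorem abs_nodeHeight_append_sub_le (t u : List Bool) :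
    |nodeHeight (t ++ u) - nodeHeight u| ≤
      ((1 / 3) ^ u.length - (1 / 3) ^ (t.length + u.length)) / 2 := by
  induction t with
  | nil => simp
  | cons b t ih =>
    calc |nodeHeight (b :: (t ++ u)) - nodeHeight u|
        ≤ |nodeHeight (b :: (t ++ u)) - nodeHeight (t ++ u)| +
            |nodeHeight (t ++ u) - nodeHeight u| := abs_sub_le _ _ _
      _ ≤ ((1 / 3) ^ u.length - (1 / 3) ^ (t.length + 1 + u.length)) / 2 := by
          rw [abs_nodeHeight_cons_sub, List.length_append, add_right_comm t.length 1, pow_succ]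
          linarith

theorem nodeHeight_lt_of_true_cons_suffix {u v : List Bool} (h : true :: u <:+ v) :
    nodeHeight u < nodeHeight v := by
  obtain ⟨t, rfl⟩ := h
  have hbound := neg_le_of_abs_le (abs_nodeHeight_append_sub_le t (true :: u))
  have hstep : (0 : ℝ) < (1 / 3) ^ (u.length + 1) := by positivity
  have htail : (0 : ℝ) < (1 / 3) ^ (t.length + (u.length + 1)) := by positivity
  simp only [nodeHeight, List.length_cons] at hbound
  linarith

theorem nodeHeight_lt_of_false_cons_suffix {u v : List Bool} (h : false :: u <:+ v) :
    nodeHeight v < nodeHeight u := by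
  obtain ⟨t, rfl⟩ := h
  have hbound := le_of_abs_le (abs_nodeHeight_append_sub_le t (false :: u))
  have hstep : (0 : ℝ) < (1 / 3) ^ (u.length + 1) := by positivity
  have htail : (0 : ℝ) < (1 / 3) ^ (t.length + (u.length + 1)) := by positivity
  simp only [nodeHeight, List.length_cons] at hbound
  linarith

theorem nodeHeight_ne_of_suffix_of_ne {u v : List Bool} (h : u <:+ v) (hne : u ≠ v) :
    nodeHeight u ≠ nodeHeight v := by
  obtain ⟨b, hb⟩ := List.exists_cons_suffix_of_suffix_of_ne h hne
  cases b
  · exact (nodeHeight_lt_of_false_cons_suffix hb).ne'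
  · exact (nodeHeight_lt_of_true_cons_suffix hb).ne

theorem injOn_nodeHeight_suffixes (w : List Bool) : Set.InjOn nodeHeight {u | u <:+ w} := by
  intro u hu v hv huv
  by_contra hne
  rcases List.suffix_or_suffix_of_suffix hu hv with h | h
  · exact nodeHeight_ne_of_suffix_of_ne h hne huv
  · exact nodeHeight_ne_of_suffix_of_ne h (Ne.symm hne) huv.symm

def greedyPath (f : List Bool → Bool) : ℕ → List Bool
  | 0 => []
  | n + 1 => (f (greedyPath f n) == f []) :: greedyPath f n

theorem length_greedyPath (f : List Bool → Bool) (n : ℕ) : (greedyPath f n).length = n := by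
  induction n with
  | zero => rfl
  | succ n ih => simp [greedyPath, ih]

theorem eq_of_cons_suffix_greedyPath {f : List Bool → Bool} {n : ℕ} {b : Bool} {u : List Bool}
    (h : b :: u <:+ greedyPath f n) : b = (f u == f []) := by
  induction n with
  | zero => simp [greedyPath] at h
  | succ n ih =>
    rcases List.suffix_cons_iff.1 h with h | h
    · obtain ⟨rfl, rfl⟩ := List.cons_eq_cons.1 h
      rfl
    · exact ih h

theorem nodeHeight_lt_of_suffix_greedyPath {f : List Bool → Bool} {n : ℕ} {u v : List Bool}
    (hu : u <:+ greedyPath f n) (hv : v <:+ greedyPath f n) (hfu : f u = f [])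
    (hfv : f v ≠ f []) :
    nodeHeight u < nodeHeight v := by
  have hne : u ≠ v := by rintro rfl; exact hfv hfu
  rcases List.suffix_or_suffix_of_suffix hu hv with h | h
  · obtain ⟨b, hb⟩ := List.exists_cons_suffix_of_suffix_of_ne h hne
    obtain rfl : b = true := by simpa [hfu] using eq_of_cons_suffix_greedyPath (hb.trans hv)
    exact nodeHeight_lt_of_true_cons_suffix hb
  · obtain ⟨b, hb⟩ := List.exists_cons_suffix_of_suffix_of_ne h hne.symm
    obtain rfl : b = false := by
      rw [eq_of_cons_suffix_greedyPath (hb.trans hu)]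
      simpa using hfv
    exact nodeHeight_lt_of_false_cons_suffix hb

noncomputable def nodeCorner (u : List Bool) : ℝ × ℝ × ℝ :=
  (binIndex u / 2 ^ u.length, (binIndex u + 1) / 2 ^ u.length, nodeHeight u)

theorem nodeCorner_fst_le_snd_fst (u : List Bool) : (nodeCorner u).1 ≤ (nodeCorner u).2.1 := by
  simp only [nodeCorner]
  gcongr
  linarith

noncomputable def treeCorners (T : ℕ) : Finset (ℝ × ℝ × ℝ) :=
  (List.finite_length_le Bool T).toFinset.image nodeCorner

theorem filter_inCorner_treeCorners (w : List Bool) (lo hi : ℝ) :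
    (treeCorners w.length).filter (fun s => InCorner (leafPoint w, lo, hi) s) =
      {u ∈ w.tails.toFinset | lo ≤ nodeHeight u ∧ nodeHeight u ≤ hi}.image nodeCorner := by
  ext s
  simp only [treeCorners, mem_filter, mem_image, Set.Finite.mem_toFinset, Set.mem_ofPred_eq,
    List.mem_toFinset, List.mem_tails]
  constructor
  · rintro ⟨⟨u, hu, rfl⟩, hx₁, hx₂, hlo, hhi⟩
    exact ⟨u, ⟨(leafPoint_mem_Icc_iff hu).1 ⟨hx₁, hx₂⟩, hlo, hhi⟩, rfl⟩
  · rintro ⟨u, ⟨hu, hlo, hhi⟩, rfl⟩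
    have hx := (leafPoint_mem_Icc_iff hu.length_le).2 hu
    exact ⟨⟨u, hu.length_le, rfl⟩, hx.1, hx.2, hlo, hhi⟩

theorem injOn_nodeCorner_tails (w : List Bool) : Set.InjOn nodeCorner w.tails.toFinset :=
  fun u hu v hv huv => injOn_nodeHeight_suffixes w (by simpa using hu) (by simpa using hv)
    (congrArg (fun s => s.2.2) huv)

end CornerTree

open CornerTree in
/-- Corners are not cover-decomposable: for every `p ≥ 1` there is a finite
collection of corners such that for every 2-coloring, some point of `ℝ³` is
contained in exactly `p` of the corners, all of the same color. -/
theorem corners_not_cover_decomposable (p : ℕ) (hp : 0 < p) :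
    ∃ S : Finset (ℝ × ℝ × ℝ),
      (∀ s ∈ S, s.1 ≤ s.2.1) ∧
      ∀ χ : (ℝ × ℝ × ℝ) → Bool, ∃ q : ℝ × ℝ × ℝ, ∃ c : Bool,
        (S.filter (fun s => InCorner q s)).card = p ∧
        ∀ s ∈ S.filter (fun s => InCorner q s), χ s = c := by
  refine ⟨treeCorners (2 * p - 2), fun s hs => ?_, fun χ => ?_⟩
  · obtain ⟨u, -, rfl⟩ := mem_image.1 hs
    exact nodeCorner_fst_le_snd_fst u
  set w := greedyPath (χ ∘ nodeCorner) (2 * p - 2)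
  have hw : w.length = 2 * p - 2 := length_greedyPath _ _
  obtain ⟨lo, hi, c, hcard, hcol⟩ :=
    exists_monochromatic_window (s := w.tails.toFinset) ((χ ∘ nodeCorner) [])
    ((injOn_nodeHeight_suffixes w).mono fun u hu => by simpa using hu)
    (fun u hu v hv => nodeHeight_lt_of_suffix_greedyPath (by simpa using hu) (by simpa using hv))
    hp (by rw [List.card_toFinset_tails, hw]; omega)
  refine ⟨(leafPoint w, lo, hi), c, ?_, fun s hs => ?_⟩
  · rw [← hw, filter_inCorner_treeCorners, card_image_of_injOn
      ((injOn_nodeCorner_tails w).mono (filter_subset _ _)), hcard]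
  · rw [← hw, filter_inCorner_treeCorners] at hs
    obtain ⟨u, hu, rfl⟩ := mem_image.1 hs
    exact hcol u hu
end

section
/- For every k ≥ 1, every finite point set S ⊂ ℝ² (with distinct x-coordinates and distinct y-coordinates) can be colored with k colors so that every bottomless rectangle containing at least 3k−2 points of S contains at least one point of each color. -/
/-- Membership in the bottomless rectangle `{(x,y) : a ≤ x ≤ b, y ≤ c}`. -/
def InBottomless (a b c : ℝ) (p : ℝ × ℝ) : Prop :=
  a ≤ p.1 ∧ p.1 ≤ b ∧ p.2 ≤ c

noncomputable instance (a b c : ℝ) :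
    DecidablePred (fun p : ℝ × ℝ => InBottomless a b c p) := by
  unfold InBottomless; infer_instance

/-!
Sweep the points from bottom to top, keeping only their `x`-coordinates, and maintain a partial
colouring of the points seen so far with two invariants: two points of the same colour have at
least `k - 1` points strictly between them, and for every colour `c` each `c`-free strip (set of
points in an interval) has at most `3k - 3` points. A new point can only create `c`-free strips of
`3k - 2` points, all containing it; so the union of two of them is again a `c`-free strip, and
there is just one. Among its `k` middle points a colour occurs at most once by spacing, and `c`
not at all, so one of them is uncoloured; giving it colour `c` restores both invariants, since
it has `k - 1` points of the strip on either side. Uncoloured points get an arbitrary colour at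
the end: a bottomless rectangle is a strip of the points below its top edge, which were all
present at some stage of the sweep.
-/

open Finset

namespace BottomlessColoring

variable {k : ℕ}

noncomputable def strip (T : Finset ℝ) (a b : ℝ) : Finset ℝ := T.filter (· ∈ Set.Icc a b)

noncomputable def between (T : Finset ℝ) (x y : ℝ) : Finset ℝ := T.filter (· ∈ Set.Ioo x y)

def Avoids (σ : ℝ → Option (Fin k)) (c : Fin k) (V : Finset ℝ) : Prop := ∀ x ∈ V, σ x ≠ some c

def ShortGaps (k : ℕ) (T : Finset ℝ) (σ : ℝ → Option (Fin k)) (c : Fin k) : Prop :=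
  ∀ a b, Avoids σ c (strip T a b) → #(strip T a b) ≤ 3 * k - 3

structure IsSpaced (k : ℕ) (T : Finset ℝ) (σ : ℝ → Option (Fin k)) : Prop where
  mem_of_eq_some {x : ℝ} {c : Fin k} : σ x = some c → x ∈ T
  le_card_between {x y : ℝ} {c : Fin k} : σ x = some c → σ y = some c → x < y →
    k - 1 ≤ #(between T x y)

def Refines (σ τ : ℝ → Option (Fin k)) : Prop := ∀ x c, σ x = some c → τ x = some c

theorem Refines.refl (σ : ℝ → Option (Fin k)) : Refines σ σ := fun _ _ h => h

theorem Refines.trans {σ τ ρ : ℝ → Option (Fin k)} (h₁ : Refines σ τ) (h₂ : Refines τ ρ) :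
    Refines σ ρ := fun x c h => h₂ x c (h₁ x c h)

theorem refines_update {σ : ℝ → Option (Fin k)} {q : ℝ} (hq : σ q = none) (c : Fin k) :
    Refines σ (Function.update σ q (some c)) := by
  intro x d hx
  rwa [Function.update_of_ne (by rintro rfl; simp [hq] at hx)]

theorem Avoids.of_refines {σ τ : ℝ → Option (Fin k)} {c : Fin k} {V : Finset ℝ}
    (h : Avoids τ c V) (hστ : Refines σ τ) : Avoids σ c V :=
  fun x hx hσx => h x hx (hστ x c hσx)

theorem ShortGaps.of_refines {T : Finset ℝ} {σ τ : ℝ → Option (Fin k)} {c : Fin k}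
    (h : ShortGaps k T σ c) (hστ : Refines σ τ) : ShortGaps k T τ c :=
  fun a b hfree => h a b (hfree.of_refines hστ)

theorem IsSpaced.mono {T U : Finset ℝ} {σ : ℝ → Option (Fin k)} (h : IsSpaced k T σ)
    (hTU : T ⊆ U) : IsSpaced k U σ where
  mem_of_eq_some hx := hTU (h.mem_of_eq_some hx)
  le_card_between hx hy hxy :=
    (h.le_card_between hx hy hxy).trans (card_le_card (filter_subset_filter _ hTU))

theorem card_strip_insert_le {T : Finset ℝ} {σ : ℝ → Option (Fin k)} {c : Fin k} {p a b : ℝ}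
    (hT : ShortGaps k T σ c) (hfree : Avoids σ c (strip (insert p T) a b)) :
    #(strip (insert p T) a b) ≤ 3 * k - 2 ∧
      (3 * k - 3 < #(strip (insert p T) a b) → p ∈ Set.Icc a b) := by
  have hfree' : Avoids σ c (strip T a b) :=
    fun x hx => hfree x (filter_subset_filter _ (subset_insert p T) hx)
  have hle := hT a b hfree'
  have hk := c.pos
  unfold strip at hfree' hle ⊢
  rw [filter_insert]
  split_ifs with hp
  · exact ⟨(card_insert_le _ _).trans (by omega), fun _ => hp⟩
  · exact ⟨by omega, by omega⟩

theorem strip_union_strip {U : Finset ℝ} {a b a' b' p : ℝ} (hp : p ∈ Set.Icc a b)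
    (hp' : p ∈ Set.Icc a' b') :
    strip U a b ∪ strip U a' b' = strip U (min a a') (max b b') := by
  ext x
  simp only [strip, mem_union, mem_filter, Set.mem_union, and_or_left,
    ← Set.Icc_union_Icc' (hp'.1.trans hp.2) (hp.1.trans hp'.2)]

theorem card_filter_eq_of_image_univ {ι α : Type*} [Fintype ι] [DecidableEq α] {V : Finset α}
    {e : ι → α} (he : Function.Injective e) (hV : univ.image e = V) (P : α → Prop)
    [DecidablePred P] : #(V.filter P) = #(univ.filter fun i => P (e i)) := by
  subst hV
  rw [filter_image, card_image_of_injective _ he]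

theorem card_between_le {U : Finset ℝ} {a b : ℝ} {n : ℕ} {e : Fin n ↪o ℝ}
    (he : univ.image e = strip U a b) (i j : Fin n) : #(between U (e i) (e j)) ≤ j - i - 1 := by
  have he_mem (i) : e i ∈ strip U a b := he ▸ mem_image_of_mem e (mem_univ i)
  have hsub : between U (e i) (e j) ⊆ (strip U a b).filter fun x => e i < x ∧ x < e j := by
    intro x hx
    obtain ⟨hxU, hix, hxj⟩ := mem_filter.mp hx
    have hi := (mem_filter.mp (he_mem i)).2
    have hj := (mem_filter.mp (he_mem j)).2
    exact mem_filter.mpr ⟨mem_filter.mpr ⟨hxU, hi.1.trans hix.le, hxj.le.trans hj.2⟩, hix, hxj⟩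
  refine (card_le_card hsub).trans_eq ?_
  simp only [card_filter_eq_of_image_univ e.injective he, OrderEmbedding.lt_iff_lt,
    filter_lt_lt_eq_Ioo, Fin.card_Ioo]

theorem exists_eq_none_of_card_le {ι β : Type*} [Fintype ι] [Fintype β] [DecidableEq β]
    {f : ι → Option β} {c : β} (hcard : Fintype.card β ≤ Fintype.card ι)
    (hc : ∀ i, f i ≠ some c) (hinj : ∀ i j d, f i = some d → f j = some d → i = j) :
    ∃ i, f i = none := by
  by_contra! hsome
  have hmaps : Set.MapsTo f (univ : Finset ι) ((univ.erase c).image some) := by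
    intro i _
    obtain ⟨d, hd⟩ := Option.ne_none_iff_exists'.mp (hsome i)
    have hdc : d ≠ c := fun h => hc i (h ▸ hd)
    simp [hd, hdc]
  have hinjOn : Set.InjOn f (univ : Finset ι) := by
    intro i _ j _ hij
    obtain ⟨d, hd⟩ := Option.ne_none_iff_exists'.mp (hsome i)
    exact hinj i j d hd (hij ▸ hd)
  have hle := (card_le_card_of_injOn f hmaps hinjOn).trans card_image_le
  rw [card_univ, card_erase_of_mem (mem_univ c), card_univ] at hle
  have := Fintype.card_pos_iff.mpr ⟨c⟩
  omega

theorem exists_uncolored_middle {U : Finset ℝ} {σ : ℝ → Option (Fin k)} {c : Fin k} {a b : ℝ}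
    (hσ : IsSpaced k U σ) (hV : #(strip U a b) = 3 * k - 2)
    (hfree : Avoids σ c (strip U a b)) :
    ∃ q ∈ strip U a b, σ q = none ∧ k - 1 ≤ #((strip U a b).filter (· < q)) ∧
      k - 1 ≤ #((strip U a b).filter (q < ·)) := by
  set V := strip U a b
  obtain ⟨e, he⟩ : ∃ e : Fin (3 * k - 2) ↪o ℝ, univ.image e = V :=
    ⟨_, V.image_orderEmbOfFin_univ hV⟩
  have he_mem (i) : e i ∈ V := he ▸ mem_image_of_mem e (mem_univ i)
  -- The window of the `k` middle points, of ranks `k - 1, …, 2k - 2` in the strip.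
  let w : Fin k → Fin (3 * k - 2) := fun j => ⟨k - 1 + j, by omega⟩
  obtain ⟨j, hj⟩ : ∃ j, σ (e (w j)) = none := by
    refine exists_eq_none_of_card_le le_rfl (fun j => hfree _ (he_mem _)) ?_
    intro j₁ j₂ d h₁ h₂
    by_contra hne
    wlog h : j₁ < j₂ generalizing j₁ j₂
    · exact this j₂ j₁ h₂ h₁ (Ne.symm hne) (lt_of_le_of_ne (not_lt.mp h) (Ne.symm hne))
    have hlt : e (w j₁) < e (w j₂) := e.strictMono (by simp only [w, Fin.lt_def] at h ⊢; omega)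
    have := (hσ.le_card_between h₁ h₂ hlt).trans (card_between_le he _ _)
    simp only [w, Fin.lt_def] at this h
    omega
  refine ⟨e (w j), he_mem _, hj, ?_, ?_⟩
  · simp only [card_filter_eq_of_image_univ e.injective he, OrderEmbedding.lt_iff_lt,
      filter_gt_eq_Iio, Fin.card_Iio, w]
    omega
  · simp only [card_filter_eq_of_image_univ e.injective he, OrderEmbedding.lt_iff_lt,
      filter_lt_eq_Ioi, Fin.card_Ioi, w]
    omega

theorem IsSpaced.update {U : Finset ℝ} {σ : ℝ → Option (Fin k)} {c : Fin k} {a b q : ℝ}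
    (hσ : IsSpaced k U σ) (hfree : Avoids σ c (strip U a b)) (hq : q ∈ strip U a b)
    (hleft : k - 1 ≤ #((strip U a b).filter (· < q)))
    (hright : k - 1 ≤ #((strip U a b).filter (q < ·))) :
    IsSpaced k U (Function.update σ q (some c)) := by
  have hqU : q ∈ U := (mem_filter.mp hq).1
  have hqab : q ∈ Set.Icc a b := (mem_filter.mp hq).2
  have outside {y : ℝ} (hy : σ y = some c) : y < a ∨ b < y := by
    by_contra! h
    exact hfree y (mem_filter.mpr ⟨hσ.mem_of_eq_some hy, h⟩) hy
  constructor
  · intro x d hx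
    by_cases hxq : x = q
    · exact hxq ▸ hqU
    · rw [Function.update_of_ne hxq] at hx
      exact hσ.mem_of_eq_some hx
  · intro x y d hx hy hxy
    by_cases hxq : x = q <;> by_cases hyq : y = q
    · exact absurd (hxq.trans hyq.symm) hxy.ne
    · subst hxq
      rw [Function.update_self, Option.some_inj] at hx
      rw [Function.update_of_ne hyq, ← hx] at hy
      have hby : b < y := (outside hy).resolve_left (by linarith [hqab.1])
      refine hright.trans (card_le_card fun z hz => ?_)
      obtain ⟨hzV, hxz⟩ := mem_filter.mp hz
      obtain ⟨hzU, hzab⟩ := mem_filter.mp hzV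
      exact mem_filter.mpr ⟨hzU, hxz, hzab.2.trans_lt hby⟩
    · subst hyq
      rw [Function.update_self, Option.some_inj] at hy
      rw [Function.update_of_ne hxq, ← hy] at hx
      have hxa : x < a := (outside hx).resolve_right (by linarith [hqab.2])
      refine hleft.trans (card_le_card fun z hz => ?_)
      obtain ⟨hzV, hzy⟩ := mem_filter.mp hz
      obtain ⟨hzU, hzab⟩ := mem_filter.mp hzV
      exact mem_filter.mpr ⟨hzU, hxa.trans_le hzab.1, hzy⟩
    · rw [Function.update_of_ne hxq] at hx
      rw [Function.update_of_ne hyq] at hy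
      exact hσ.le_card_between hx hy hxy

theorem shortGaps_of_refines_of_mem {T : Finset ℝ} {σ τ : ℝ → Option (Fin k)} {c : Fin k}
    {p a b q : ℝ} (hT : ShortGaps k T σ c) (hfree : Avoids σ c (strip (insert p T) a b))
    (hV : #(strip (insert p T) a b) = 3 * k - 2) (hq : q ∈ strip (insert p T) a b)
    (hστ : Refines σ τ) (hτq : τ q = some c) : ShortGaps k (insert p T) τ c := by
  intro a' b' hfree'
  by_contra! hbig
  have hfreeσ := hfree'.of_refines hστ
  obtain ⟨hW_le, hpW⟩ := card_strip_insert_le hT hfreeσ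
  obtain ⟨-, hpV⟩ := card_strip_insert_le hT hfree
  have hunion := strip_union_strip (U := insert p T) (hpV (by omega)) (hpW hbig)
  have hhull : Avoids σ c (strip (insert p T) (min a a') (max b b')) := by
    rw [← hunion]
    intro x hx
    rcases mem_union.mp hx with h | h
    · exact hfree x h
    · exact hfreeσ x h
  have hH := (card_strip_insert_le hT hhull).1
  have hVH : strip (insert p T) a b = strip (insert p T) (min a a') (max b b') :=
    eq_of_subset_of_card_le (hunion ▸ subset_union_left) (by omega)
  have hWH : strip (insert p T) a' b' = strip (insert p T) (min a a') (max b b') :=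
    eq_of_subset_of_card_le (hunion ▸ subset_union_right) (by omega)
  exact hfree' q (hWH ▸ hVH ▸ hq) hτq

theorem exists_refines_shortGaps {T : Finset ℝ} {σ : ℝ → Option (Fin k)} {c : Fin k} {p : ℝ}
    (hT : ShortGaps k T σ c) (hσ : IsSpaced k (insert p T) σ) :
    ∃ τ, Refines σ τ ∧ IsSpaced k (insert p T) τ ∧ ShortGaps k (insert p T) τ c := by
  by_cases h : ShortGaps k (insert p T) σ c
  · exact ⟨σ, Refines.refl σ, hσ, h⟩
  obtain ⟨a, b, hfree, hbig⟩ : ∃ a b, Avoids σ c (strip (insert p T) a b) ∧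
      3 * k - 3 < #(strip (insert p T) a b) := by
    simpa [ShortGaps] using h
  have hV : #(strip (insert p T) a b) = 3 * k - 2 := by
    have := (card_strip_insert_le hT hfree).1
    omega
  obtain ⟨q, hq, hqnone, hleft, hright⟩ := exists_uncolored_middle hσ hV hfree
  exact ⟨_, refines_update hqnone c, hσ.update hfree hq hleft hright,
    shortGaps_of_refines_of_mem hT hfree hV hq (refines_update hqnone c) (Function.update_self ..)⟩

theorem exists_refines_insert {T : Finset ℝ} {σ : ℝ → Option (Fin k)} (hσ : IsSpaced k T σ)
    (hgaps : ∀ c, ShortGaps k T σ c) (p : ℝ) :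
    ∃ τ, Refines σ τ ∧ IsSpaced k (insert p T) τ ∧ ∀ c, ShortGaps k (insert p T) τ c := by
  suffices ∀ D : Finset (Fin k), ∃ τ, Refines σ τ ∧ IsSpaced k (insert p T) τ ∧
      ∀ c ∈ D, ShortGaps k (insert p T) τ c by
    obtain ⟨τ, hστ, hτ, hD⟩ := this univ
    exact ⟨τ, hστ, hτ, fun c => hD c (mem_univ c)⟩
  intro D
  induction D using Finset.induction_on with
  | empty => exact ⟨σ, Refines.refl σ, hσ.mono (subset_insert p T), by simp⟩
  | insert c D _ ih =>
    obtain ⟨τ, hστ, hτ, hD⟩ := ih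
    obtain ⟨ρ, hτρ, hρ, hc⟩ := exists_refines_shortGaps ((hgaps c).of_refines hστ) hτ
    refine ⟨ρ, hστ.trans hτρ, hρ, fun d hd => ?_⟩
    rcases mem_insert.mp hd with rfl | hd
    · exact hc
    · exact (hD d hd).of_refines hτρ

theorem exists_sweep_coloring (S : Finset (ℝ × ℝ)) :
    ∃ σ : ℝ → Option (Fin k), IsSpaced k (S.image Prod.fst) σ ∧
      (∀ c, ShortGaps k (S.image Prod.fst) σ c) ∧
      ∀ r c, ShortGaps k ((S.filter (·.2 ≤ r)).image Prod.fst) σ c := by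
  refine S.induction_on_max_value Prod.snd ?_ fun p S _ hmax ih => ?_
  · refine ⟨fun _ => none, ⟨by simp, by simp⟩, fun c a b _ => ?_, fun r c a b _ => ?_⟩ <;>
      simp [strip]
  · obtain ⟨σ, hσ, hgaps, hlower⟩ := ih
    obtain ⟨τ, hστ, hτ, hτgaps⟩ := exists_refines_insert hσ hgaps p.1
    rw [← image_insert] at hτ hτgaps
    refine ⟨τ, hτ, hτgaps, fun r c => ?_⟩
    by_cases hpr : p.2 ≤ r
    · rw [filter_true_of_mem fun x hx => ?_]
      · exact hτgaps c
      rcases mem_insert.mp hx with rfl | hx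
      · exact hpr
      · exact (hmax x hx).trans hpr
    · rw [filter_insert, if_neg hpr]
      exact (hlower r c).of_refines hστ

end BottomlessColoring

open BottomlessColoring

theorem bottomless_rectangles_coloring_general (k : ℕ) (hk : 1 ≤ k)
    (S : Finset (ℝ × ℝ))
    (hx : Set.InjOn Prod.fst (S : Set (ℝ × ℝ))) :
    ∃ χ : ℝ × ℝ → Fin k, ∀ a b c : ℝ, a ≤ b →
      3 * k - 2 ≤ (S.filter (InBottomless a b c)).card →
      ∀ col : Fin k, ∃ p ∈ S.filter (InBottomless a b c), χ p = col := by
  obtain ⟨σ, -, -, hlower⟩ := exists_sweep_coloring (k := k) S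
  refine ⟨fun p => (σ p.1).getD ⟨0, hk⟩, fun a b r _ hcard col => ?_⟩
  set R := S.filter (InBottomless a b r)
  have hR : R.image Prod.fst = strip ((S.filter (·.2 ≤ r)).image Prod.fst) a b := by
    ext x
    simp only [R, strip, mem_image, mem_filter, InBottomless, Set.mem_Icc]
    grind
  have hcolored : ¬ Avoids σ col (R.image Prod.fst) := fun hfree => by
    have := hlower r col a b (hR ▸ hfree)
    rw [← hR, card_image_of_injOn (hx.mono (coe_subset.mpr (filter_subset _ _)))] at this
    exact absurd (hcard.trans this) (by omega)
  obtain ⟨x, hxR, hσx⟩ : ∃ x ∈ R.image Prod.fst, σ x = some col := by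
    simpa [Avoids] using hcolored
  obtain ⟨p, hp, rfl⟩ := mem_image.mp hxR
  exact ⟨p, hp, by simp [hσx]⟩

/-- Every finite planar point set (with distinct `x`- and `y`-coordinates) can
be `k`-colored so that every bottomless rectangle containing at least `3k - 2`
of the points contains a point of each color. -/
theorem bottomless_rectangles_coloring (k : ℕ) (hk : 1 ≤ k)
    (S : Finset (ℝ × ℝ))
    (hx : Set.InjOn Prod.fst (S : Set (ℝ × ℝ)))
    (hy : Set.InjOn Prod.snd (S : Set (ℝ × ℝ))) :
    ∃ χ : ℝ × ℝ → Fin k, ∀ a b c : ℝ, a ≤ b →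
      3 * k - 2 ≤ (S.filter (InBottomless a b c)).card →
      ∀ col : Fin k, ∃ p ∈ S.filter (InBottomless a b c), χ p = col :=
  bottomless_rectangles_coloring_general k hk S hx
end

section
/- For every k ≥ 1, every finite sequence of distinct real numbers presented by insertion can be colored online (each point receives one of 2k−1 colors immediately upon arrival, never changed) so that at every time, no set of k consecutive present points contains the same color twice. -/
/-!
A newly arrived point takes a color not used by the `k - 1` nearest present points on either
side of it; these carry at most `2k - 2` colors, so one of `2k - 1` colors is free. If two
points `p` and `q` lie in a window of at most `k` consecutive points at some time and `p`
arrived after `q`, then when `p` arrived fewer than `k - 1` points lay strictly between them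
(all of those belong to the window too), so `q` was one of the neighbours whose color `p`
avoided.
-/

open Finset

/-- `C` is a set of consecutive points (an interval in the real-line order)
among the points arrived before time `t`. -/
def ConsecPrefix {n : ℕ} (x : Fin n → ℝ) (t : ℕ) (C : Finset (Fin n)) : Prop :=
  (∀ i ∈ C, (i : ℕ) < t) ∧
  ∀ i ∈ C, ∀ j ∈ C, ∀ m : Fin n, (m : ℕ) < t → x i ≤ x m → x m ≤ x j → m ∈ C

namespace OnlineColoring

section Near

variable {α : Type*} [LinearOrder α]

def nearBelow (m : ℕ) (S : Finset α) (y : α) : Finset α :=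
  {z ∈ S | z < y ∧ #{w ∈ S | z < w ∧ w < y} < m}

def nearAbove (m : ℕ) (S : Finset α) (y : α) : Finset α :=
  {z ∈ S | y < z ∧ #{w ∈ S | y < w ∧ w < z} < m}

def near (m : ℕ) (S : Finset α) (y : α) : Finset α :=
  nearBelow m S y ∪ nearAbove m S y

theorem card_nearBelow_le (m : ℕ) (S : Finset α) (y : α) : #(nearBelow m S y) ≤ m := by
  set f := fun z => #{w ∈ S | z < w ∧ w < y}
  have anti : StrictAntiOn f {z | z ∈ S ∧ z < y} := by
    intro a _ b hb hab
    refine card_lt_card ((ssubset_iff_of_subset fun w hw => ?_).2 ⟨b, ?_, ?_⟩)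
    · simp only [mem_filter] at hw ⊢
      exact ⟨hw.1, hab.trans hw.2.1, hw.2.2⟩
    · simp [hb.1, hab, hb.2]
    · simp
  have maps : Set.MapsTo f (nearBelow m S y) (range m) :=
    fun z hz => mem_range.2 (mem_filter.1 hz).2.2
  have inj : Set.InjOn f (nearBelow m S y) :=
    anti.injOn.mono fun z hz => (mem_filter.1 hz).imp_right And.left
  simpa using card_le_card_of_injOn f maps inj

theorem card_nearAbove_le (m : ℕ) (S : Finset α) (y : α) : #(nearAbove m S y) ≤ m := by
  have dual : #{z ∈ S | y < z ∧ #{w ∈ S | w < z ∧ y < w} < m} ≤ m :=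
    card_nearBelow_le (α := αᵒᵈ) m S y
  simpa only [nearAbove, and_comm (a := y < _)] using dual

theorem card_near_le (m : ℕ) (S : Finset α) (y : α) : #(near m S y) ≤ 2 * m :=
  (card_union_le _ _).trans (by linarith [card_nearBelow_le m S y, card_nearAbove_le m S y])

end Near

theorem mem_take_ofFn {α : Type*} {n s : ℕ} {x : Fin n → α} {w : α} :
    w ∈ (List.ofFn x).take s ↔ ∃ m : Fin n, (m : ℕ) < s ∧ x m = w := by
  simp only [List.mem_take_iff_getElem, List.length_ofFn, List.getElem_ofFn, lt_min_iff]
  exact ⟨fun ⟨j, hj, h⟩ => ⟨⟨j, hj.2⟩, hj.1, h⟩, fun ⟨m, hm, h⟩ => ⟨m, ⟨hm, m.2⟩, h⟩⟩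

section Greedy

variable {α κ : Type*} [LinearOrder α] [Nonempty κ]

/-- `L` is the list of earlier arrivals in arrival order; their colors are recomputed from their
own prefixes, so the color of `y` depends only on the past. -/
noncomputable def greedyColor (m : ℕ) (L : List α) (y : α) : κ :=
  Classical.epsilon fun c =>
    ∀ i : Fin L.length, L[i] ∈ near m L.toFinset y → greedyColor m (L.take i) L[i] ≠ c
termination_by L.length
decreasing_by simp

theorem greedyColor_ne [Fintype κ] {m : ℕ} (hκ : 2 * m < Fintype.card κ) {L : List α}
    (hL : L.Nodup) (y : α) (i : Fin L.length) (hi : L[i] ∈ near m L.toFinset y) :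
    (greedyColor m (L.take i) L[i] : κ) ≠ greedyColor m L y := by
  classical
  set N : Finset (Fin L.length) := {j | L[j] ∈ near m L.toFinset y}
  have hN : #N ≤ 2 * m := by
    refine (card_le_card_of_injOn (fun j => L[j]) (fun j hj => ?_) ?_).trans
      (card_near_le m L.toFinset y)
    · exact (mem_filter.1 hj).2
    · exact fun a _ b _ hab => List.nodup_iff_injective_get.1 hL hab
  obtain ⟨c, -, hc⟩ := exists_mem_notMem_of_card_lt_card
    (s := N.image fun j : Fin L.length => (greedyColor m (L.take j) L[j] : κ)) (t := univ)
    (by rw [card_univ]; exact card_image_le.trans_lt (hN.trans_lt hκ))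
  have free : ∃ c : κ, ∀ j : Fin L.length, L[j] ∈ near m L.toFinset y →
      greedyColor m (L.take j) L[j] ≠ c :=
    ⟨c, fun j hj hjc => hc (mem_image.2 ⟨j, by simpa [N] using hj, hjc⟩)⟩
  conv_rhs => rw [greedyColor]
  exact Classical.epsilon_spec free i hi

theorem greedyColor_take_ofFn_ne [Fintype κ] {m n : ℕ} (hκ : 2 * m < Fintype.card κ)
    {x : Fin n → α} (hx : Function.Injective x) {i j : Fin n} (hji : j < i)
    (hnear : x j ∈ near m ((List.ofFn x).take i).toFinset (x i)) :
    (greedyColor m ((List.ofFn x).take j) (x j) : κ) ≠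
      greedyColor m ((List.ofFn x).take i) (x i) := by
  have hL : ((List.ofFn x).take i).Nodup :=
    (List.nodup_ofFn.2 hx).sublist (List.take_sublist _ _)
  have h := greedyColor_ne hκ hL (x i) ⟨j, by simp [hji]⟩ (by simpa using hnear)
  simpa [List.take_take, hji.le] using h

end Greedy

end OnlineColoring

namespace ConsecPrefix

open OnlineColoring

variable {n t : ℕ} {x : Fin n → ℝ} {C : Finset (Fin n)}

theorem card_between_add_two_le (hC : ConsecPrefix x t C) {a b : Fin n}
    (ha : a ∈ C) (hb : b ∈ C) (hab : x a < x b) {s : ℕ} (hs : s ≤ t) :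
    #{w ∈ ((List.ofFn x).take s).toFinset | x a < w ∧ w < x b} + 2 ≤ #C := by
  set B := {w ∈ ((List.ofFn x).take s).toFinset | x a < w ∧ w < x b}
  have hsub : insert (x a) (insert (x b) B) ⊆ C.image x := by
    refine insert_subset (mem_image_of_mem x ha) (insert_subset (mem_image_of_mem x hb) ?_)
    intro w hw
    obtain ⟨hw, haw, hwb⟩ := mem_filter.1 hw
    obtain ⟨m, hm, rfl⟩ := mem_take_ofFn.1 (List.mem_toFinset.1 hw)
    exact mem_image_of_mem x (hC.2 a ha b hb m (by omega) haw.le hwb.le)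
  have hcard : #(insert (x a) (insert (x b) B)) = #B + 2 := by
    rw [card_insert_of_notMem, card_insert_of_notMem]
    · simp [B]
    · simp [B, hab.ne]
  exact hcard ▸ (card_le_card hsub).trans card_image_le

theorem mem_near (hC : ConsecPrefix x t C) {k : ℕ} (hCk : #C ≤ k) {i j : Fin n}
    (hi : i ∈ C) (hj : j ∈ C) (hji : j < i) (hne : x j ≠ x i) :
    x j ∈ near (k - 1) ((List.ofFn x).take i).toFinset (x i) := by
  have hit : (i : ℕ) ≤ t := (hC.1 i hi).le
  have present : x j ∈ ((List.ofFn x).take i).toFinset :=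
    List.mem_toFinset.2 (mem_take_ofFn.2 ⟨j, hji, rfl⟩)
  rcases hne.lt_or_gt with hlt | hgt
  · have := hC.card_between_add_two_le hj hi hlt hit
    exact mem_union_left _ (mem_filter.2 ⟨present, hlt, by omega⟩)
  · have := hC.card_between_add_two_le hi hj hgt hit
    exact mem_union_right _ (mem_filter.2 ⟨present, hgt, by omega⟩)

end ConsecPrefix

open OnlineColoring

/-- Online coloring under insertion: for every `k ≥ 1` there is a deterministic
online algorithm (the color of a newly arrived point depends only on the
previously arrived points and the new point) using `2k - 1` colors such that at
every time, no set of `k` consecutive present points contains a color twice. -/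
theorem online_coloring_2k_minus_1 (k : ℕ) (hk : 1 ≤ k) :
    ∃ col : List ℝ → ℝ → Fin (2 * k - 1),
      ∀ n : ℕ, ∀ x : Fin n → ℝ, Function.Injective x →
        let χ : Fin n → Fin (2 * k - 1) :=
          fun i => col ((List.ofFn x).take i) (x i)
        ∀ t : ℕ, t ≤ n → ∀ C : Finset (Fin n), ConsecPrefix x t C →
          C.card ≤ k → ∀ i ∈ C, ∀ j ∈ C, i ≠ j → χ i ≠ χ j := by
  have : NeZero (2 * k - 1) := ⟨by omega⟩
  have hκ : 2 * (k - 1) < Fintype.card (Fin (2 * k - 1)) := by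
    rw [Fintype.card_fin]; omega
  refine ⟨greedyColor (k - 1), fun n x hx t _ C hC hCk => ?_⟩
  have earlier_ne_later : ∀ i ∈ C, ∀ j ∈ C, j < i →
      greedyColor (k - 1) ((List.ofFn x).take j) (x j) ≠
        greedyColor (k - 1) ((List.ofFn x).take i) (x i) := fun i hi j hj hji =>
    greedyColor_take_ofFn_ne hκ hx hji (hC.mem_near hCk hi hj hji (hx.ne hji.ne))
  intro i hi j hj hij
  rcases hij.lt_or_gt with hlt | hgt
  · exact earlier_ne_later j hj i hi hlt
  · exact (earlier_ne_later i hi j hj hgt).symm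
end

section
/- Greedy online coloring correctness: Suppose points on a line are colored with colors from a palette of size 2k−1 such that whenever a new point p arrives, it receives a color not used by any of the k−1 nearest present points to its left nor the k−1 nearest present points to its right. Then such a color always exists, and at every time, every set of at most k consecutive present points has pairwise distinct colors. -/
/-!
An arriving point has at most `k - 1` near neighbours on each side: among the earlier points to
its left, the near ones are those with fewer than `k - 1` earlier points above them, and there
are at most `k - 1` such points. So at most `2k - 2` colours are forbidden and one of the `2k - 1`
colours is free. Conversely, within a block of at most `k` consecutive present points, the
earlier-arrived of two points has at most `k - 2` earlier points between it and the later one,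
so it was a near neighbour of the later one when that arrived, and their colours differ.
-/

open scoped Classical

/-- `j` is one of the `k - 1` nearest points to the left of `i` among the
points arrived before `i`: `x j < x i` and fewer than `k - 1` earlier points
lie strictly between them. -/
def NearLeft {n : ℕ} (x : Fin n → ℝ) (k : ℕ) (i j : Fin n) : Prop :=
  (j : ℕ) < (i : ℕ) ∧ x j < x i ∧
    (Finset.univ.filter
      (fun m : Fin n => (m : ℕ) < (i : ℕ) ∧ x j < x m ∧ x m < x i)).card < k - 1

/-- `j` is one of the `k - 1` nearest points to the right of `i` among the
points arrived before `i`. -/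
def NearRight {n : ℕ} (x : Fin n → ℝ) (k : ℕ) (i j : Fin n) : Prop :=
  (j : ℕ) < (i : ℕ) ∧ x i < x j ∧
    (Finset.univ.filter
      (fun m : Fin n => (m : ℕ) < (i : ℕ) ∧ x i < x m ∧ x m < x j)).card < k - 1

open Finset

theorem card_filter_card_filter_lt_lt_le {ι α : Type*} [LinearOrder α] {s : Finset ι}
    {f : ι → α} (hf : Set.InjOn f s) (r : ℕ) :
    #{j ∈ s | #{m ∈ s | f j < f m} < r} ≤ r := by
  set T := {j ∈ s | #{m ∈ s | f j < f m} < r}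
  rcases T.eq_empty_or_nonempty with hT | hT
  · simp [hT]
  obtain ⟨j₀, hj₀, hmin⟩ := T.exists_min_image f hT
  obtain ⟨hj₀s, hj₀r⟩ := mem_filter.mp hj₀
  have hsub : T.erase j₀ ⊆ {m ∈ s | f j₀ < f m} := by
    intro m hm
    obtain ⟨hne, hmT⟩ := mem_erase.mp hm
    have hms := (mem_filter.mp hmT).1
    exact mem_filter.mpr
      ⟨hms, (hmin m hmT).lt_of_ne fun h => hne (hf hms hj₀s h.symm)⟩
  have := card_le_card hsub
  have := card_erase_add_one hj₀
  omega

section Near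

variable {n k : ℕ} {x : Fin n → ℝ}

theorem nearRight_iff_nearLeft_neg {i j : Fin n} : NearRight x k i j ↔ NearLeft (-x) k i j := by
  simp only [NearRight, NearLeft, Pi.neg_apply, neg_lt_neg_iff]
  simp only [and_comm (a := x _ < x j)]

theorem card_filter_nearLeft_le (hx : Function.Injective x) (i : Fin n) :
    #{j | NearLeft x k i j} ≤ k - 1 := by
  have hs := card_filter_card_filter_lt_lt_le
    (s := {m : Fin n | (m : ℕ) < i ∧ x m < x i}) hx.injOn (k - 1)
  refine (card_le_card fun j hj => ?_).trans hs
  obtain ⟨hji, hxji, hcard⟩ := (mem_filter.mp hj).2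
  refine mem_filter.mpr ⟨mem_filter.mpr ⟨mem_univ j, hji, hxji⟩, ?_⟩
  rwa [filter_filter, filter_congr fun m _ => by rw [and_assoc, and_comm (a := x m < x i)]]

theorem card_filter_nearRight_le (hx : Function.Injective x) (i : Fin n) :
    #{j | NearRight x k i j} ≤ k - 1 := by
  simpa only [nearRight_iff_nearLeft_neg] using
    card_filter_nearLeft_le (x := -x) (neg_injective.comp hx) i

theorem card_filter_near_le (hx : Function.Injective x) (i : Fin n) :
    #{j | NearLeft x k i j ∨ NearRight x k i j} ≤ 2 * (k - 1) := by
  rw [filter_or, two_mul]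
  exact (card_union_le _ _).trans
    (add_le_add (card_filter_nearLeft_le hx i) (card_filter_nearRight_le hx i))

end Near

namespace ConsecPrefix

variable {n k t : ℕ} {x : Fin n → ℝ} {C : Finset (Fin n)}

theorem neg (hC : ConsecPrefix x t C) : ConsecPrefix (-x) t C :=
  ⟨hC.1, fun i hi j hj m hm hxi hxj =>
    hC.2 j hj i hi m hm (neg_le_neg_iff.mp hxj) (neg_le_neg_iff.mp hxi)⟩

theorem nearLeft_of_lt (hC : ConsecPrefix x t C) (hCk : #C ≤ k) {i j : Fin n}
    (hi : i ∈ C) (hj : j ∈ C) (hji : (j : ℕ) < i) (hxji : x j < x i) :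
    NearLeft x k i j := by
  refine ⟨hji, hxji, ?_⟩
  have hsub : ({m | (m : ℕ) < i ∧ x j < x m ∧ x m < x i} : Finset (Fin n)) ⊆
      (C.erase i).erase j := by
    intro m hm
    obtain ⟨hmi, hjm, hmi'⟩ := (mem_filter.mp hm).2
    have hmC := hC.2 j hj i hi m (hmi.trans (hC.1 i hi)) hjm.le hmi'.le
    exact mem_erase.mpr ⟨mt (congrArg x) hjm.ne', mem_erase.mpr ⟨mt (congrArg x) hmi'.ne, hmC⟩⟩
  have hj' : j ∈ C.erase i := mem_erase.mpr ⟨Fin.ne_of_lt hji, hj⟩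
  calc _ ≤ #((C.erase i).erase j) := card_le_card hsub
    _ < #(C.erase i) := card_erase_lt_of_mem hj'
    _ = #C - 1 := card_erase_of_mem hi
    _ ≤ k - 1 := Nat.sub_le_sub_right hCk 1

theorem nearLeft_or_nearRight (hC : ConsecPrefix x t C) (hx : Function.Injective x)
    (hCk : #C ≤ k) {i j : Fin n} (hi : i ∈ C) (hj : j ∈ C) (hji : (j : ℕ) < i) :
    NearLeft x k i j ∨ NearRight x k i j := by
  rcases (hx.ne (Fin.ne_of_lt hji)).lt_or_gt with hxji | hxij
  · exact Or.inl (hC.nearLeft_of_lt hCk hi hj hji hxji)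
  · exact Or.inr (nearRight_iff_nearLeft_neg.mpr
      (hC.neg.nearLeft_of_lt hCk hi hj hji (neg_lt_neg hxij)))

end ConsecPrefix

theorem greedy_online_coloring_correct_general (k : ℕ)
    (n : ℕ) (x : Fin n → ℝ) (hx : Function.Injective x)
    (χ : Fin n → Fin (2 * k - 1)) :
    (∀ i : Fin n, ∃ c : Fin (2 * k - 1), ∀ j : Fin n,
        NearLeft x k i j ∨ NearRight x k i j → χ j ≠ c) ∧
    ((∀ i j : Fin n, NearLeft x k i j ∨ NearRight x k i j → χ j ≠ χ i) →
      ∀ t : ℕ, t ≤ n → ∀ C : Finset (Fin n), ConsecPrefix x t C →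
        C.card ≤ k → ∀ i ∈ C, ∀ j ∈ C, i ≠ j → χ i ≠ χ j) := by
  constructor
  · intro i
    set N : Finset (Fin n) := {j | NearLeft x k i j ∨ NearRight x k i j}
    have hfree : #(N.image χ) < #(univ : Finset (Fin (2 * k - 1))) :=
      calc #(N.image χ) ≤ #N := card_image_le
        _ ≤ 2 * (k - 1) := card_filter_near_le hx i
        -- the colour `χ i` shows that the palette is nonempty, i.e. `1 ≤ k`
        _ < 2 * k - 1 := by have := (χ i).pos; omega
        _ = #univ := (card_fin _).symm
    obtain ⟨c, -, hc⟩ := exists_mem_notMem_of_card_lt_card hfree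
    exact ⟨c, fun j hj hjc => hc (mem_image.mpr ⟨j, mem_filter.mpr ⟨mem_univ j, hj⟩, hjc⟩)⟩
  · intro hχ t _ C hC hCk i hi j hj hij
    rcases hij.lt_or_gt with hij | hji
    · exact hχ j i (hC.nearLeft_or_nearRight hx hCk hj hi hij)
    · exact fun h => hχ i j (hC.nearLeft_or_nearRight hx hCk hi hj hji) h.symm

/-- Greedy online coloring correctness: with a palette of `2k - 1` colors,
(1) for every arriving point there is always a color avoiding the colors of
the `k - 1` nearest present points on each side, and (2) if every point is
colored avoiding the colors of its `k - 1` nearest present neighbours on each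
side, then at every time every set of at most `k` consecutive present points
has pairwise distinct colors. -/
theorem greedy_online_coloring_correct (k : ℕ) (hk : 1 ≤ k)
    (n : ℕ) (x : Fin n → ℝ) (hx : Function.Injective x)
    (χ : Fin n → Fin (2 * k - 1)) :
    (∀ i : Fin n, ∃ c : Fin (2 * k - 1), ∀ j : Fin n,
        NearLeft x k i j ∨ NearRight x k i j → χ j ≠ c) ∧
    ((∀ i j : Fin n, NearLeft x k i j ∨ NearRight x k i j → χ j ≠ χ i) →
      ∀ t : ℕ, t ≤ n → ∀ C : Finset (Fin n), ConsecPrefix x t C →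
        C.card ≤ k → ∀ i ∈ C, ∀ j ∈ C, i ≠ j → χ i ≠ χ j) :=
  greedy_online_coloring_correct_general k n x hx χ
end

section
/- For every k ≥ 1, every finite point set S ⊂ ℝ² can be colored with 2k−1 colors so that every bottomless rectangle containing at most k points of S contains no color twice. -/
open Finset

theorem exists_coloring_of_card_lt {α : Type*} {n : ℕ} [NeZero n] (rank : α → ℕ)
    (N : α → Finset α) (hN : ∀ p, ∀ q ∈ N p, rank q < rank p) (s : Set α)
    (hcard : ∀ p ∈ s, #(N p) < n) :
    ∃ χ : α → Fin n, ∀ p ∈ s, ∀ q ∈ N p, χ q ≠ χ p := by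
  classical
  let χ : α → Fin n := (measure rank).wf.fix fun p colorBelow =>
    if h : ∃ c, ∀ q (hq : q ∈ N p), colorBelow q (hN p q hq) ≠ c then h.choose else 0
  have hχ (p : α) : χ p = if h : ∃ c, ∀ q ∈ N p, χ q ≠ c then h.choose else 0 :=
    (measure rank).wf.fix_eq _ p
  refine ⟨χ, fun p hp => ?_⟩
  have hfree : ∃ c, ∀ q ∈ N p, χ q ≠ c := by
    obtain ⟨c, -, hc⟩ := exists_mem_notMem_of_card_lt_card (s := (N p).image χ) (t := univ)
      (by simpa using card_image_le.trans_lt (hcard p hp))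
    exact ⟨c, fun q hq hqc => hc (hqc ▸ mem_image_of_mem χ hq)⟩
  rw [hχ p, dif_pos hfree]
  exact hfree.choose_spec

namespace Set

variable {α : Type*} [LinearOrder α] {a b c : α}

theorem mem_uIoo_or_mem_uIoo_of_lt_iff_lt (hab : a ≠ b) (hac : a ≠ c) (hbc : b ≠ c)
    (hside : a < c ↔ b < c) : b ∈ uIoo a c ∨ a ∈ uIoo b c := by
  rcases hab.lt_or_gt with h | h <;> rcases hac.lt_or_gt with h' | h'
  · exact .inl (mem_uIoo_of_lt h (hside.1 h'))
  · exact .inr (mem_uIoo_of_gt h' h)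
  · exact .inr (mem_uIoo_of_lt h h')
  · have hcb : c < b := hbc.symm.lt_of_le (not_lt.1 fun hb => h'.not_gt (hside.2 hb))
    exact .inl (mem_uIoo_of_gt hcb h)

theorem uIoo_subset_uIoo_of_mem (hb : b ∈ uIoo a c) : uIoo b c ⊆ uIoo a c :=
  uIoo_subset_Ioo (uIoo_subset_uIcc_self hb) right_mem_uIcc

end Set

open Classical in
noncomputable def pointsBetween (S : Finset (ℝ × ℝ)) (p q : ℝ × ℝ) :
    Finset (ℝ × ℝ) :=
  S.filter fun r => r.2 < p.2 ∧ r.1 ∈ Set.uIoo q.1 p.1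

@[simp]
theorem mem_pointsBetween {S : Finset (ℝ × ℝ)} {p q r : ℝ × ℝ} :
    r ∈ pointsBetween S p q ↔ r ∈ S ∧ r.2 < p.2 ∧ r.1 ∈ Set.uIoo q.1 p.1 := by
  simp [pointsBetween]

/-- `p`, `q` and `pointsBetween S p q` are the points of `S` in the smallest bottomless rectangle
containing `p` and a lower point `q`. -/
noncomputable def lowerConflicts (k : ℕ) (S : Finset (ℝ × ℝ)) (p : ℝ × ℝ) :
    Finset (ℝ × ℝ) :=
  S.filter fun q => q.2 < p.2 ∧ #(pointsBetween S p q) + 2 ≤ k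

section lowerConflicts

variable {k : ℕ} {S : Finset (ℝ × ℝ)} {p q : ℝ × ℝ}

theorem card_filter_snd_lt_lt_of_mem_lowerConflicts (hq : q ∈ lowerConflicts k S p) :
    #(S.filter (·.2 < q.2)) < #(S.filter (·.2 < p.2)) := by
  obtain ⟨hqS, hqp, -⟩ := mem_filter.1 hq
  refine card_lt_card <| (ssubset_iff_of_subset ?_).2 ⟨q, mem_filter.2 ⟨hqS, hqp⟩, by simp⟩
  intro r
  simp only [mem_filter]
  exact fun ⟨hrS, hrq⟩ => ⟨hrS, hrq.trans hqp⟩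

theorem card_pointsBetween_lt {q' : ℝ × ℝ} (hq'S : q' ∈ S) (hq'p : q'.2 < p.2)
    (hq' : q'.1 ∈ Set.uIoo q.1 p.1) :
    #(pointsBetween S p q') < #(pointsBetween S p q) := by
  refine card_lt_card <| (ssubset_iff_of_subset ?_).2 ⟨q', by simp [*], by simp⟩
  intro r
  simp only [mem_pointsBetween]
  exact fun ⟨hrS, hrp, hr⟩ => ⟨hrS, hrp, Set.uIoo_subset_uIoo_of_mem hq' hr⟩

theorem card_lowerConflicts_le (hx : Set.InjOn Prod.fst (S : Set (ℝ × ℝ))) (hp : p ∈ S) :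
    #(lowerConflicts k S p) ≤ 2 * k - 2 := by
  have hne {r : ℝ × ℝ} (hr : r ∈ lowerConflicts k S p) : r.1 ≠ p.1 := fun h =>
    (mem_filter.1 hr).2.1.ne (congrArg Prod.snd (hx (mem_filter.1 hr).1 hp h))
  have key := card_le_card_of_injOn (s := lowerConflicts k S p) (t := univ ×ˢ range (k - 1))
    (fun q => (decide (q.1 < p.1), #(pointsBetween S p q))) ?mapsTo ?injOn
  case mapsTo =>
    intro q hq
    have := (mem_filter.1 hq).2.2
    simp only [coe_product, coe_univ, coe_range, Set.mem_prod, Set.mem_univ, Set.mem_Iio,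
      true_and]
    omega
  case injOn =>
    intro q hq q' hq' hf
    simp only [Prod.mk.injEq, decide_eq_decide] at hf
    by_contra hqq'
    obtain ⟨hqS, hqp, -⟩ := mem_filter.1 hq
    obtain ⟨hq'S, hq'p, -⟩ := mem_filter.1 hq'
    rcases Set.mem_uIoo_or_mem_uIoo_of_lt_iff_lt (fun h => hqq' (hx hqS hq'S h))
        (hne hq) (hne hq') hf.1 with h | h
    · exact (card_pointsBetween_lt hq'S hq'p h).ne hf.2.symm
    · exact (card_pointsBetween_lt hqS hqp h).ne hf.2
  simp only [card_product, card_univ, Fintype.card_bool, card_range] at key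
  omega

theorem mem_lowerConflicts_of_inBottomless {a b c : ℝ}
    (hcard : #(S.filter (InBottomless a b c)) ≤ k)
    (hp : p ∈ S.filter (InBottomless a b c)) (hq : q ∈ S.filter (InBottomless a b c))
    (hqp : q.2 < p.2) : q ∈ lowerConflicts k S p := by
  obtain ⟨hpS, hpa, hpb, hpc⟩ := mem_filter.1 hp
  obtain ⟨hqS, hqa, hqb, -⟩ := mem_filter.1 hq
  refine mem_filter.2 ⟨hqS, hqp, ?_⟩
  have hsub : insert q (insert p (pointsBetween S p q)) ⊆ S.filter (InBottomless a b c) := by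
    intro r hr
    simp only [mem_insert, mem_pointsBetween] at hr
    rcases hr with rfl | rfl | ⟨hrS, hrp, hr⟩
    · exact hq
    · exact hp
    · have hrab := Set.uIoo_subset_Ioo ⟨hqa, hqb⟩ ⟨hpa, hpb⟩ hr
      exact mem_filter.2 ⟨hrS, hrab.1.le, hrab.2.le, (hrp.trans_le hpc).le⟩
  have hq : q ∉ insert p (pointsBetween S p q) := by simp [hqp.ne, Prod.ext_iff]
  have hp : p ∉ pointsBetween S p q := by simp
  have := card_le_card hsub
  rw [card_insert_of_notMem hq, card_insert_of_notMem hp] at this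
  omega

end lowerConflicts

/-- Every finite planar point set can be colored with `2k - 1` colors so that
every bottomless rectangle containing at most `k` of the points contains no
color twice. -/
theorem bottomless_rainbow_coloring (k : ℕ) (hk : 1 ≤ k)
    (S : Finset (ℝ × ℝ))
    (hx : Set.InjOn Prod.fst (S : Set (ℝ × ℝ)))
    (hy : Set.InjOn Prod.snd (S : Set (ℝ × ℝ))) :
    ∃ χ : ℝ × ℝ → Fin (2 * k - 1), ∀ a b c : ℝ, a ≤ b →
      (S.filter (InBottomless a b c)).card ≤ k →
      ∀ p ∈ S.filter (InBottomless a b c), ∀ q ∈ S.filter (InBottomless a b c),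
        p ≠ q → χ p ≠ χ q := by
  have : NeZero (2 * k - 1) := ⟨by omega⟩
  obtain ⟨χ, hχ⟩ := exists_coloring_of_card_lt (n := 2 * k - 1)
    (fun p => #(S.filter (·.2 < p.2))) (lowerConflicts k S)
    (fun _ _ => card_filter_snd_lt_lt_of_mem_lowerConflicts) S
    (fun p hp => (card_lowerConflicts_le hx hp).trans_lt (by omega))
  refine ⟨χ, fun a b c _ hcard p hp q hq hpq => ?_⟩
  have hpS := (mem_filter.1 hp).1
  have hqS := (mem_filter.1 hq).1
  have hne : p.2 ≠ q.2 := fun h => hpq (hy hpS hqS h)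
  rcases hne.lt_or_gt with hpq | hqp
  · exact hχ q hqS p (mem_lowerConflicts_of_inBottomless hcard hq hp hpq)
  · exact (hχ p hpS q (mem_lowerConflicts_of_inBottomless hcard hp hq hqp)).symm
end

section
/- No bounded online algorithm for 2 colors: For every m ≥ 1 and every deterministic online 2-coloring algorithm (which must irrevocably color each inserted point upon arrival), there is an adversarial insertion sequence of points on the line such that at some time the present points contain m consecutive points of the same color. Specifically, the adversary can maintain the invariant that the present points form a block of red points followed by a block of blue points, by always inserting the next point between the two blocks. -/
theorem Nat.exists_eq_of_le_succ {g : ℕ → ℕ} (hg : ∀ k, g (k + 1) ≤ g k + 1) {m N : ℕ}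
    (h0 : g 0 ≤ m) (hN : m ≤ g N) : ∃ t ≤ N, g t = m := by
  induction N with
  | zero => exact ⟨0, le_rfl, le_antisymm h0 hN⟩
  | succ N ih =>
    by_cases hm : m ≤ g N
    · obtain ⟨t, ht, hgt⟩ := ih hm
      exact ⟨t, ht.trans N.le_succ, hgt⟩
    · exact ⟨N + 1, le_rfl, by linarith [hg N]⟩

theorem consecPrefix_univ_filter_eq {n : ℕ} (x : Fin n → ℝ) (χ : Fin n → Bool)
    (hsep : ∀ i j, χ i = true → χ j = false → x i < x j) (c : Bool) :
    ConsecPrefix x n (Finset.univ.filter (χ · = c)) := by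
  refine ⟨fun i _ => i.isLt, fun i hi j hj k _ hik hkj => ?_⟩
  simp only [Finset.mem_filter, Finset.mem_univ, true_and] at hi hj ⊢
  cases c <;> cases hk : χ k
  · rfl
  · linarith [hsep k i hk hi]
  · linarith [hsep j k hj hk]
  · rfl

structure GapState where
  history : List ℝ
  lo : ℝ
  hi : ℝ

namespace GapState

noncomputable def probe (s : GapState) : ℝ := (s.lo + s.hi) / 2

noncomputable def next (A : List ℝ → ℝ → Bool) (s : GapState) : GapState :=
  if A s.history s.probe then ⟨s.history ++ [s.probe], s.probe, s.hi⟩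
  else ⟨s.history ++ [s.probe], s.lo, s.probe⟩

theorem lo_lt_probe {s : GapState} (h : s.lo < s.hi) : s.lo < s.probe := by
  unfold probe; linarith

theorem probe_lt_hi {s : GapState} (h : s.lo < s.hi) : s.probe < s.hi := by
  unfold probe; linarith

end GapState

open GapState

section Adversary

variable (A : List ℝ → ℝ → Bool)

noncomputable def gapRun (k : ℕ) : GapState := (next A)^[k] ⟨[], 0, 1⟩

noncomputable def gapPoint (k : ℕ) : ℝ := (gapRun A k).probe

noncomputable def gapColor (k : ℕ) : Bool := A (gapRun A k).history (gapPoint A k)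

theorem gapRun_succ (k : ℕ) : gapRun A (k + 1) = (gapRun A k).next A :=
  Function.iterate_succ_apply' _ _ _

theorem history_gapRun (k : ℕ) : (gapRun A k).history = (List.range k).map (gapPoint A) := by
  induction k with
  | zero => rfl
  | succ k ih =>
    rw [gapRun_succ, next]
    split_ifs <;> simp [ih, List.range_succ, gapPoint]

theorem take_ofFn_gapPoint {n : ℕ} (i : Fin n) :
    (List.ofFn fun j : Fin n => gapPoint A j).take i = (gapRun A i).history := by
  have hofFn : (List.ofFn fun j : Fin n => gapPoint A j) = (List.range n).map (gapPoint A) := by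
    rw [List.ofFn_eq_map, ← List.map_coe_finRange_eq_range, List.map_map]
    rfl
  rw [hofFn, ← List.map_take, List.take_range, min_eq_left i.isLt.le, history_gapRun]

theorem lo_lt_hi_gapRun (k : ℕ) : (gapRun A k).lo < (gapRun A k).hi := by
  induction k with
  | zero => simp [gapRun]
  | succ k ih =>
    rw [gapRun_succ, next]
    split_ifs
    exacts [probe_lt_hi ih, lo_lt_probe ih]

theorem lo_gapRun_lt_gapPoint (k : ℕ) : (gapRun A k).lo < gapPoint A k :=
  lo_lt_probe (lo_lt_hi_gapRun A k)

theorem gapPoint_lt_hi_gapRun (k : ℕ) : gapPoint A k < (gapRun A k).hi :=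
  probe_lt_hi (lo_lt_hi_gapRun A k)

theorem lo_gapRun_succ (k : ℕ) :
    (gapRun A (k + 1)).lo = if gapColor A k then gapPoint A k else (gapRun A k).lo := by
  rw [gapRun_succ, next, gapColor, gapPoint]
  split_ifs <;> rfl

theorem hi_gapRun_succ (k : ℕ) :
    (gapRun A (k + 1)).hi = if gapColor A k then (gapRun A k).hi else gapPoint A k := by
  rw [gapRun_succ, next, gapColor, gapPoint]
  split_ifs <;> rfl

theorem monotone_lo_gapRun : Monotone fun k => (gapRun A k).lo := by
  refine monotone_nat_of_le_succ fun k => ?_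
  rw [lo_gapRun_succ]
  split_ifs
  exacts [(lo_gapRun_lt_gapPoint A k).le, le_rfl]

theorem antitone_hi_gapRun : Antitone fun k => (gapRun A k).hi := by
  refine antitone_nat_of_succ_le fun k => ?_
  rw [hi_gapRun_succ]
  split_ifs
  exacts [le_rfl, (gapPoint_lt_hi_gapRun A k).le]

variable {A}

theorem gapPoint_le_lo_gapRun {i j : ℕ} (hij : i < j) (hi : gapColor A i = true) :
    gapPoint A i ≤ (gapRun A j).lo := by
  have hstep : (gapRun A (i + 1)).lo = gapPoint A i := by simp [lo_gapRun_succ, hi]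
  exact hstep ▸ monotone_lo_gapRun A hij

theorem hi_gapRun_le_gapPoint {i j : ℕ} (hij : i < j) (hi : gapColor A i = false) :
    (gapRun A j).hi ≤ gapPoint A i := by
  have hstep : (gapRun A (i + 1)).hi = gapPoint A i := by simp [hi_gapRun_succ, hi]
  exact hstep ▸ antitone_hi_gapRun A hij

variable (A)

theorem gapPoint_injective : Function.Injective (gapPoint A) := by
  refine Function.Injective.of_lt_imp_ne fun i j hij heq => ?_
  cases hi : gapColor A i
  · linarith [hi_gapRun_le_gapPoint hij hi, gapPoint_lt_hi_gapRun A j]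
  · linarith [gapPoint_le_lo_gapRun hij hi, lo_gapRun_lt_gapPoint A j]

theorem gapPoint_lt_of_gapColor {i j : ℕ} (hi : gapColor A i = true) (hj : gapColor A j = false) :
    gapPoint A i < gapPoint A j := by
  rcases lt_trichotomy i j with hij | rfl | hji
  · exact (gapPoint_le_lo_gapRun hij hi).trans_lt (lo_gapRun_lt_gapPoint A j)
  · simp_all
  · exact (gapPoint_lt_hi_gapRun A i).trans_le (hi_gapRun_le_gapPoint hji hj)

noncomputable def gapCount (c : Bool) (t : ℕ) : ℕ :=
  ((Finset.range t).filter (gapColor A · = c)).card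

theorem gapCount_succ_le (c : Bool) (t : ℕ) : gapCount A c (t + 1) ≤ gapCount A c t + 1 := by
  unfold gapCount
  rw [Finset.range_add_one, Finset.filter_insert]
  split_ifs
  exacts [Finset.card_insert_le _ _, Nat.le_succ _]

theorem card_filter_gapColor_eq_gapCount (c : Bool) (n : ℕ) :
    (Finset.univ.filter fun i : Fin n => gapColor A i = c).card = gapCount A c n := by
  simp only [gapCount, Finset.card_filter]
  exact Fin.sum_univ_eq_sum_range (fun k => if gapColor A k = c then 1 else 0) n

theorem gapCount_true_add_gapCount_false (t : ℕ) :
    gapCount A true t + gapCount A false t = t := by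
  simpa [gapCount] using
    Finset.card_filter_add_card_filter_not (s := Finset.range t) (gapColor A · = true)

end Adversary

theorem exists_gapCount_eq (A : List ℝ → ℝ → Bool) (m : ℕ) : ∃ c t, gapCount A c t = m := by
  obtain ⟨c, hc⟩ : ∃ c, m ≤ gapCount A c (2 * m) := by
    have := gapCount_true_add_gapCount_false A (2 * m)
    by_cases h : m ≤ gapCount A true (2 * m)
    exacts [⟨true, h⟩, ⟨false, by omega⟩]
  obtain ⟨t, -, ht⟩ := Nat.exists_eq_of_le_succ (gapCount_succ_le A c) (Nat.zero_le m) hc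
  exact ⟨c, t, ht⟩

theorem no_bounded_online_two_coloring_general (m : ℕ)
    (A : List ℝ → ℝ → Bool) :
    ∃ n : ℕ, ∃ x : Fin n → ℝ, Function.Injective x ∧
      let χ : Fin n → Bool := fun i => A ((List.ofFn x).take i) (x i)
      ∃ t : ℕ, t ≤ n ∧ ∃ C : Finset (Fin n), ConsecPrefix x t C ∧
        C.card = m ∧ ∃ c : Bool, ∀ i ∈ C, χ i = c := by
  obtain ⟨c, n, hcount⟩ := exists_gapCount_eq A m
  set x : Fin n → ℝ := fun i => gapPoint A i
  have hχ (i : Fin n) : A ((List.ofFn x).take i) (x i) = gapColor A i := by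
    rw [take_ofFn_gapPoint]
    rfl
  refine ⟨n, x, (gapPoint_injective A).comp Fin.val_injective, ?_⟩
  intro χ
  refine ⟨n, le_rfl, Finset.univ.filter (χ · = c), ?_, ?_, c, by simp⟩
  · exact consecPrefix_univ_filter_eq x χ (fun i j hi hj => by
      simp only [χ, hχ] at hi hj; exact gapPoint_lt_of_gapColor A hi hj) c
  · simp only [χ, hχ]
    rw [card_filter_gapColor_eq_gapCount, hcount]

/-- No online 2-coloring algorithm has bounded monochromatic runs: for every
`m ≥ 1` and every deterministic online 2-coloring algorithm `A` (assigning to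
each inserted point a color depending only on the previously inserted points
and the new point), there is an insertion sequence of distinct points such
that at some time the present points contain `m` consecutive points of the
same color. -/
theorem no_bounded_online_two_coloring (m : ℕ) (hm : 1 ≤ m)
    (A : List ℝ → ℝ → Bool) :
    ∃ n : ℕ, ∃ x : Fin n → ℝ, Function.Injective x ∧
      let χ : Fin n → Bool := fun i => A ((List.ofFn x).take i) (x i)
      ∃ t : ℕ, t ≤ n ∧ ∃ C : Finset (Fin n), ConsecPrefix x t C ∧
        C.card = m ∧ ∃ c : Bool, ∀ i ∈ C, χ i = c :=
  no_bounded_online_two_coloring_general m A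
end
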